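/- arXiv:1105.3373 — 5 statements merged into one kernel-verified Lean document; each statement's English description precedes it below -/
import Mathlib

section
/- Tsirelson's theorem (finite-dimensional, projective case): Let n be a positive integer, let A, B, and for each x ∈ A a finite outcome set O_x^A and for each y ∈ B a finite outcome set O_y^B be finite nonempty sets. Let ρ be an n×n complex matrix that is positive semidefinite with trace 1, and for each x ∈ A, a ∈ O_x^A and each y ∈ B, b ∈ O_y^B let E^x_a and F^y_b be n×n complex matrices that are orthogonal projections (Hermitian and idempotent) satisfying ∑_a E^x_a = 1 for every x, ∑_b F^y_b = 1 for every y, and E^x_a F^y_b = F^y_b E^x_a for all a, b, x, y. Then there exist a positive integer m, positive semidefinite m×m matrices Ẽ^x_a and F̃^y_b with ∑_a Ẽ^x_a = 1 for every x and ∑_b F̃^y_b = 1 for every y, and a positive semidefinite (m·m)×(m·m) matrix ρ' with trace 1, such that trace(ρ' · (Ẽ^x_a ⊗ₖ F̃^y_b)) = trace(ρ · E^x_a · F^y_b) for all a, b, x, y, where ⊗ₖ denotes the Kronecker product. -/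
/-!
Let `𝒜` and `ℬ` be the star algebras generated by the `E x a` and by the `F y b`; they commute.
On the star subalgebra `S` of `Mₙ ⊗ Mₙ` spanned by the `X ⊗ₖ Y` with `X ∈ 𝒜`, `Y ∈ ℬ`, the
contraction `μ (X ⊗ₖ Y) = X * Y` is a star homomorphism, precisely because `𝒜` and `ℬ` commute.
Hence `φ z = tr (ρ * μ z)` is nonnegative on positive elements of `S`, which are of the form
`sᴴ * s` with `s ∈ S` by the functional calculus. Representing `φ` through the trace pairing on `S`
gives a Hermitian `σ ∈ S`; pairing `σ` with its negative part `σ⁻ ∈ S` yields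
`0 ≤ φ σ⁻ = tr (σ * σ⁻) = -tr (σ⁻ * σ⁻)`, so `σ⁻ = 0` and `σ` is the required state,
with `E' = E` and `F' = F`.
-/

open Matrix
open scoped Kronecker ComplexOrder MatrixOrder

instance StarSubalgebra.isClosed_of_finiteDimensional {𝕜 A : Type*} [NontriviallyNormedField 𝕜]
    [CompleteSpace 𝕜] [StarRing 𝕜] [Ring A] [StarRing A] [Algebra 𝕜 A] [StarModule 𝕜 A]
    [TopologicalSpace A] [IsTopologicalAddGroup A] [ContinuousSMul 𝕜 A] [T2Space A]
    [FiniteDimensional 𝕜 A] (S : StarSubalgebra 𝕜 A) : IsClosed (S : Set A) :=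
  S.toSubalgebra.toSubmodule.closed_of_finiteDimensional

lemma StarAlgebra.commute_of_mem_adjoin {R A : Type*} [CommSemiring R] [StarRing R] [Semiring A]
    [StarRing A] [Algebra R A] [StarModule R A] {s t : Set A} (hs : ∀ a ∈ s, IsSelfAdjoint a)
    (hst : ∀ a ∈ s, ∀ b ∈ t, Commute a b) {x y : A} (hx : x ∈ adjoin R s) (hy : y ∈ adjoin R t) :
    Commute x y := by
  have hy' : y ∈ StarSubalgebra.centralizer R s := adjoin_le (fun b hb =>
    (StarSubalgebra.mem_centralizer_iff R).2 fun a ha =>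
      ⟨(hst a ha b hb).eq, by rw [(hs a ha).star_eq]; exact (hst a ha b hb).eq⟩) hy
  exact ((StarSubalgebra.mem_centralizer_iff R).1
    (adjoin_le_centralizer_centralizer R s hx) y hy').1.symm

namespace Matrix

section TraceDuality

variable {ι : Type*} [Fintype ι] {S : Submodule ℂ (Matrix ι ι ℂ)}

lemma exists_mem_trace_mul_eq (hS : ∀ z ∈ S, zᴴ ∈ S) (φ : Matrix ι ι ℂ →ₗ[ℂ] ℂ) :
    ∃ σ ∈ S, ∀ z ∈ S, (σ * z).trace = φ z := by
  let B : LinearMap.BilinForm ℂ S :=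
    ((LinearMap.mul ℂ (Matrix ι ι ℂ)).compl₁₂ S.subtype S.subtype).compr₂ (traceLinearMap ι ℂ ℂ)
  have hB : B.Nondegenerate := by
    refine ⟨fun σ hσ => ?_, fun σ hσ => ?_⟩
    · simpa [B, trace_mul_conjTranspose_self_eq_zero_iff] using hσ ⟨_, hS σ σ.2⟩
    · simpa [B, trace_conjTranspose_mul_self_eq_zero_iff] using hσ ⟨_, hS σ σ.2⟩
  exact ⟨(B.toDual hB).symm (φ.domRestrict S), Submodule.coe_mem _,
    fun z hz => B.apply_toDual_symm_apply (φ.domRestrict S) ⟨z, hz⟩⟩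

lemma exists_isHermitian_mem_trace_mul_eq (hS : ∀ z ∈ S, zᴴ ∈ S) (φ : Matrix ι ι ℂ →ₗ[ℂ] ℂ)
    (hφ : ∀ z ∈ S, φ zᴴ = star (φ z)) :
    ∃ σ ∈ S, σ.IsHermitian ∧ ∀ z ∈ S, (σ * z).trace = φ z := by
  obtain ⟨σ, hσS, hσ⟩ := exists_mem_trace_mul_eq hS φ
  have hσ' : ∀ z ∈ S, (σᴴ * z).trace = φ z := fun z hz => by
    rw [← star_star (φ z), ← hφ z hz, ← hσ _ (hS z hz), ← trace_conjTranspose, conjTranspose_mul,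
      conjTranspose_conjTranspose, trace_mul_comm]
  refine ⟨(2⁻¹ : ℂ) • (σ + σᴴ), S.smul_mem _ (S.add_mem hσS (hS σ hσS)), ?_, fun z hz => ?_⟩
  · exact (isHermitian_add_transpose_self σ).smul (by simp [IsSelfAdjoint])
  · rw [smul_mul_assoc, add_mul, trace_smul, trace_add, hσ z hz, hσ' z hz, smul_eq_mul]
    ring

end TraceDuality

variable {ι : Type*} [Fintype ι] [DecidableEq ι]

section Positivity

variable {S : StarSubalgebra ℂ (Matrix ι ι ℂ)} {c : Matrix ι ι ℂ}

lemma exists_mem_eq_conjTranspose_mul_self (hcS : c ∈ S) (hc : c.PosSemidef) :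
    ∃ s ∈ S, c = sᴴ * s := by
  refine ⟨CFC.sqrt c, ?_, ?_⟩
  · rw [CFC.sqrt_eq_real_sqrt c hc.nonneg]
    exact cfcₙ_mem (𝕜 := ℝ) (𝕜' := ℂ) _ hcS
  · rw [← star_eq_conjTranspose, (CFC.sqrt_nonneg c).isSelfAdjoint.star_eq,
      CFC.sqrt_mul_sqrt_self c hc.nonneg]

lemma posSemidef_of_mem_of_trace_mul_nonneg (hcS : c ∈ S) (hc : c.IsHermitian)
    (h : ∀ d ∈ S, d.PosSemidef → 0 ≤ (c * d).trace) : c.PosSemidef := by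
  have hc' : IsSelfAdjoint c := hc
  have hdS : c⁻ ∈ S := cfcₙ_mem (𝕜 := ℝ) (𝕜' := ℂ) _ hcS
  have hd : (c⁻).PosSemidef := (CFC.negPart_nonneg c).posSemidef
  have hcd : (c * c⁻).trace = -((c⁻)ᴴ * c⁻).trace := by
    nth_rewrite 1 [← CFC.posPart_sub_negPart c]
    rw [sub_mul, trace_sub, CFC.posPart_mul_negPart, trace_zero, zero_sub, hd.isHermitian.eq]
  have hd0 : c⁻ = 0 := by
    rw [← trace_conjTranspose_mul_self_eq_zero_iff]
    refine le_antisymm ?_ (posSemidef_conjTranspose_mul_self _).trace_nonneg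
    simpa [hcd] using h _ hdS hd
  rw [← CFC.posPart_sub_negPart c, hd0, sub_zero]
  exact (CFC.posPart_nonneg c).posSemidef

end Positivity

section Kronecker

variable {R : Type*} [CommSemiring R]

noncomputable def kroneckerContract : Matrix (ι × ι) (ι × ι) R →ₗ[R] Matrix ι ι R :=
  LinearMap.mul' R (Matrix ι ι R) ∘ₗ (kroneckerAlgEquiv ι ι R).symm.toLinearMap

@[simp]
lemma kroneckerContract_kronecker (X Y : Matrix ι ι R) :
    kroneckerContract (X ⊗ₖ Y) = X * Y := by
  simp [kroneckerContract]

variable [StarRing R] (𝒜 ℬ : StarSubalgebra R (Matrix ι ι R))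

def kroneckerSpan : StarSubalgebra R (Matrix (ι × ι) (ι × ι) R) where
  toSubalgebra := (Submodule.span R (Set.image2 (· ⊗ₖ ·) 𝒜 ℬ)).toSubalgebra
    (Submodule.subset_span ⟨1, one_mem _, 1, one_mem _, one_kronecker_one⟩)
    fun z w hz hw => by
      have := Submodule.mul_mem_mul hz hw
      rw [Submodule.span_mul_span] at this
      refine Submodule.span_mono ?_ this
      rintro _ ⟨_, ⟨X, hX, Y, hY, rfl⟩, _, ⟨X', hX', Y', hY', rfl⟩, rfl⟩
      exact ⟨X * X', mul_mem hX hX', Y * Y', mul_mem hY hY', mul_kronecker_mul _ _ _ _⟩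
  star_mem' {z} hz := by
    induction hz using Submodule.span_induction with
    | mem _ h =>
      obtain ⟨X, hX, Y, hY, rfl⟩ := h
      rw [star_eq_conjTranspose, conjTranspose_kronecker]
      exact Submodule.subset_span ⟨_, star_mem hX, _, star_mem hY, rfl⟩
    | zero => simp
    | add _ _ _ _ h₁ h₂ => rw [star_add]; exact Submodule.add_mem _ h₁ h₂
    | smul c _ _ h => rw [star_smul]; exact Submodule.smul_mem _ _ h

variable {𝒜 ℬ}

lemma kronecker_mem_kroneckerSpan {X Y : Matrix ι ι R} (hX : X ∈ 𝒜) (hY : Y ∈ ℬ) :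
    X ⊗ₖ Y ∈ kroneckerSpan 𝒜 ℬ :=
  Submodule.subset_span ⟨X, hX, Y, hY, rfl⟩

lemma kroneckerContract_mul (hcomm : ∀ X ∈ 𝒜, ∀ Y ∈ ℬ, Commute X Y)
    {z w : Matrix (ι × ι) (ι × ι) R} (hz : z ∈ kroneckerSpan 𝒜 ℬ) (hw : w ∈ kroneckerSpan 𝒜 ℬ) :
    kroneckerContract (z * w) = kroneckerContract z * kroneckerContract w := by
  induction hz, hw using Submodule.span_induction₂ with
  | mem_mem _ _ hz hw =>
    obtain ⟨X, hX, Y, hY, rfl⟩ := hz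
    obtain ⟨X', hX', Y', hY', rfl⟩ := hw
    simp only [← mul_kronecker_mul, kroneckerContract_kronecker]
    rw [mul_assoc, ← mul_assoc X', (hcomm X' hX' Y hY).eq, mul_assoc, mul_assoc]
  | zero_left => simp
  | zero_right => simp
  | add_left _ _ _ _ _ _ h₁ h₂ => simp only [add_mul, map_add, h₁, h₂]
  | add_right _ _ _ _ _ _ h₁ h₂ => simp only [mul_add, map_add, h₁, h₂]
  | smul_left _ _ _ _ _ h => simp only [smul_mul_assoc, map_smul, h]
  | smul_right _ _ _ _ _ h => simp only [mul_smul_comm, map_smul, h]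

lemma kroneckerContract_conjTranspose (hcomm : ∀ X ∈ 𝒜, ∀ Y ∈ ℬ, Commute X Y)
    {z : Matrix (ι × ι) (ι × ι) R} (hz : z ∈ kroneckerSpan 𝒜 ℬ) :
    kroneckerContract zᴴ = (kroneckerContract z)ᴴ := by
  induction hz using Submodule.span_induction with
  | mem _ hz =>
    obtain ⟨X, hX, Y, hY, rfl⟩ := hz
    simp only [conjTranspose_kronecker, kroneckerContract_kronecker, conjTranspose_mul]
    exact hcomm _ (star_mem hX) _ (star_mem hY)
  | zero => simp
  | add _ _ _ _ h₁ h₂ => simp only [conjTranspose_add, map_add, h₁, h₂]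
  | smul _ _ _ h => simp only [conjTranspose_smul, map_smul, h]

end Kronecker

section Commuting

variable {𝒜 ℬ : StarSubalgebra ℂ (Matrix ι ι ℂ)} {ρ : Matrix ι ι ℂ}

lemma trace_mul_kroneckerContract_nonneg (hcomm : ∀ X ∈ 𝒜, ∀ Y ∈ ℬ, Commute X Y)
    (hρ : ρ.PosSemidef) {d : Matrix (ι × ι) (ι × ι) ℂ} (hdS : d ∈ kroneckerSpan 𝒜 ℬ)
    (hd : d.PosSemidef) : 0 ≤ (ρ * kroneckerContract d).trace := by
  obtain ⟨s, hs, rfl⟩ := exists_mem_eq_conjTranspose_mul_self hdS hd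
  have hs' : sᴴ ∈ kroneckerSpan 𝒜 ℬ := star_mem hs
  rw [kroneckerContract_mul hcomm hs' hs, kroneckerContract_conjTranspose hcomm hs, ← mul_assoc,
    trace_mul_comm, ← mul_assoc]
  exact (hρ.mul_mul_conjTranspose_same _).trace_nonneg

theorem exists_posSemidef_trace_mul_kronecker_eq (hcomm : ∀ X ∈ 𝒜, ∀ Y ∈ ℬ, Commute X Y)
    (hρ : ρ.PosSemidef) :
    ∃ σ : Matrix (ι × ι) (ι × ι) ℂ, σ.PosSemidef ∧
      ∀ X ∈ 𝒜, ∀ Y ∈ ℬ, (σ * (X ⊗ₖ Y)).trace = (ρ * (X * Y)).trace := by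
  set S := kroneckerSpan 𝒜 ℬ
  let φ := traceLinearMap ι ℂ ℂ ∘ₗ LinearMap.mulLeft ℂ ρ ∘ₗ kroneckerContract
  have hφ : ∀ z ∈ S, φ zᴴ = star (φ z) := fun z hz => by
    simp only [φ, LinearMap.comp_apply, LinearMap.mulLeft_apply, traceLinearMap_apply,
      kroneckerContract_conjTranspose hcomm hz]
    rw [← trace_conjTranspose, conjTranspose_mul, hρ.isHermitian.eq, trace_mul_comm]
  obtain ⟨σ, hσS, hσ, hσφ⟩ :=
    exists_isHermitian_mem_trace_mul_eq (S := Subalgebra.toSubmodule S.toSubalgebra)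
      (fun z hz => star_mem (s := S) hz) φ hφ
  refine ⟨σ, posSemidef_of_mem_of_trace_mul_nonneg hσS hσ fun d hdS hd => ?_,
    fun X hX Y hY => ?_⟩
  · rw [hσφ d hdS]
    exact trace_mul_kroneckerContract_nonneg hcomm hρ hdS hd
  · rw [hσφ _ (kronecker_mem_kroneckerSpan hX hY)]
    simp [φ]

end Commuting

end Matrix

theorem tsirelson_finite_projective_general
    (n : ℕ) (hn : 0 < n)
    (A B : Type) [Fintype A] [Fintype B]
    (OA : A → Type) [∀ x, Fintype (OA x)]
    (OB : B → Type) [∀ y, Fintype (OB y)]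
    (ρ : Matrix (Fin n) (Fin n) ℂ) (hρ : ρ.PosSemidef) (hρtr : ρ.trace = 1)
    (E : ∀ x : A, OA x → Matrix (Fin n) (Fin n) ℂ)
    (F : ∀ y : B, OB y → Matrix (Fin n) (Fin n) ℂ)
    (hEherm : ∀ x a, (E x a).IsHermitian)
    (hEidem : ∀ x a, E x a * E x a = E x a)
    (hFherm : ∀ y b, (F y b).IsHermitian)
    (hFidem : ∀ y b, F y b * F y b = F y b)
    (hEsum : ∀ x, ∑ a, E x a = 1)
    (hFsum : ∀ y, ∑ b, F y b = 1)
    (hcomm : ∀ x a y b, E x a * F y b = F y b * E x a) :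
    ∃ (m : ℕ), 0 < m ∧
      ∃ (E' : ∀ x : A, OA x → Matrix (Fin m) (Fin m) ℂ)
        (F' : ∀ y : B, OB y → Matrix (Fin m) (Fin m) ℂ)
        (ρ' : Matrix (Fin m × Fin m) (Fin m × Fin m) ℂ),
        (∀ x a, (E' x a).PosSemidef) ∧
        (∀ y b, (F' y b).PosSemidef) ∧
        (∀ x, ∑ a, E' x a = 1) ∧
        (∀ y, ∑ b, F' y b = 1) ∧
        ρ'.PosSemidef ∧ ρ'.trace = 1 ∧
        (∀ x a y b,
          (ρ' * (E' x a ⊗ₖ F' y b)).trace = (ρ * E x a * F y b).trace) := by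
  let 𝒜 := StarAlgebra.adjoin ℂ {M | ∃ x a, E x a = M}
  let ℬ := StarAlgebra.adjoin ℂ {M | ∃ y b, F y b = M}
  have hE : ∀ x a, E x a ∈ 𝒜 := fun x a => StarAlgebra.subset_adjoin ℂ _ ⟨x, a, rfl⟩
  have hF : ∀ y b, F y b ∈ ℬ := fun y b => StarAlgebra.subset_adjoin ℂ _ ⟨y, b, rfl⟩
  have h𝒜ℬ : ∀ X ∈ 𝒜, ∀ Y ∈ ℬ, Commute X Y := fun X hX Y hY =>
    StarAlgebra.commute_of_mem_adjoin (by rintro _ ⟨x, a, rfl⟩; exact hEherm x a)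
      (by rintro _ ⟨x, a, rfl⟩ _ ⟨y, b, rfl⟩; exact hcomm x a y b) hX hY
  obtain ⟨σ, hσ, hσρ⟩ := exists_posSemidef_trace_mul_kronecker_eq h𝒜ℬ hρ
  refine ⟨n, hn, E, F, σ, fun x a => ?_, fun y b => ?_, hEsum, hFsum, hσ, ?_, fun x a y b => ?_⟩
  · exact IsStarProjection.nonneg ⟨hEidem x a, hEherm x a⟩ |>.posSemidef
  · exact IsStarProjection.nonneg ⟨hFidem y b, hFherm y b⟩ |>.posSemidef
  · simpa [hρtr] using hσρ 1 (one_mem 𝒜) 1 (one_mem ℬ)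
  · rw [hσρ _ (hE x a) _ (hF y b), mul_assoc]

/-- Tsirelson's theorem (finite-dimensional, projective case). -/
theorem tsirelson_finite_projective
    (n : ℕ) (hn : 0 < n)
    (A B : Type) [Fintype A] [Nonempty A] [Fintype B] [Nonempty B]
    (OA : A → Type) [∀ x, Fintype (OA x)] [∀ x, Nonempty (OA x)]
    (OB : B → Type) [∀ y, Fintype (OB y)] [∀ y, Nonempty (OB y)]
    (ρ : Matrix (Fin n) (Fin n) ℂ) (hρ : ρ.PosSemidef) (hρtr : ρ.trace = 1)
    (E : ∀ x : A, OA x → Matrix (Fin n) (Fin n) ℂ)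
    (F : ∀ y : B, OB y → Matrix (Fin n) (Fin n) ℂ)
    (hEherm : ∀ x a, (E x a).IsHermitian)
    (hEidem : ∀ x a, E x a * E x a = E x a)
    (hFherm : ∀ y b, (F y b).IsHermitian)
    (hFidem : ∀ y b, F y b * F y b = F y b)
    (hEsum : ∀ x, ∑ a, E x a = 1)
    (hFsum : ∀ y, ∑ b, F y b = 1)
    (hcomm : ∀ x a y b, E x a * F y b = F y b * E x a) :
    ∃ (m : ℕ), 0 < m ∧
      ∃ (E' : ∀ x : A, OA x → Matrix (Fin m) (Fin m) ℂ)
        (F' : ∀ y : B, OB y → Matrix (Fin m) (Fin m) ℂ)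
        (ρ' : Matrix (Fin m × Fin m) (Fin m × Fin m) ℂ),
        (∀ x a, (E' x a).PosSemidef) ∧
        (∀ y b, (F' y b).PosSemidef) ∧
        (∀ x, ∑ a, E' x a = 1) ∧
        (∀ y, ∑ b, F' y b = 1) ∧
        ρ'.PosSemidef ∧ ρ'.trace = 1 ∧
        (∀ x a y b,
          (ρ' * (E' x a ⊗ₖ F' y b)).trace = (ρ * E x a * F y b).trace) :=
  tsirelson_finite_projective_general n hn A B OA OB ρ hρ hρtr E F hEherm hEidem hFherm hFidem hEsum
    hFsum hcomm
end

section
/- If a bipartite behavior admits a tensor representation then it is quansal: Let n, m be positive integers, A, B finite nonempty sets with finite outcome sets O_x^A (x ∈ A) and O_y^B (y ∈ B). Let ρ_AB be an (n·m)×(n·m) positive semidefinite complex matrix with trace 1, let E^x_a be n×n positive semidefinite matrices with ∑_a E^x_a = 1 for each x, and let F^y_b be m×m positive semidefinite matrices with ∑_b F^y_b = 1 for each y. Then there exist m×m positive semidefinite matrices σ^x_a (for x ∈ A, a ∈ O_x^A) and a single m×m positive semidefinite matrix σ with trace 1, such that ∑_a σ^x_a = σ for every x ∈ A, and trace(σ^x_a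 · F^y_b) = trace(ρ_AB · (E^x_a ⊗ₖ F^y_b)) for all a, b, x, y. -/
open Matrix
open scoped Kronecker ComplexOrder

/-!
Bob's conditional states are `σˣₐ = Tr₁[ρ (Eˣₐ ⊗ 1)]`. They are positive because, writing
`Eˣₐ = XᴴX`, the partial trace is cyclic in the first factor, so `σˣₐ = Tr₁[(X ⊗ 1) ρ (X ⊗ 1)ᴴ]`,
a partial trace of a positive matrix. Since `∑ₐ Eˣₐ = 1`, they sum to the reduced state `Tr₁ ρ`
independently of `x`, and `Tr(Tr₁[M] F) = Tr(M (1 ⊗ F))` gives the Born rule for the product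
effect `Eˣₐ ⊗ Fʸ_b`.
-/

namespace Matrix

variable {k l R : Type*} [Fintype k]

def traceLeft [AddCommMonoid R] (M : Matrix (k × l) (k × l) R) : Matrix l l R :=
  ∑ i, M.submatrix (Prod.mk i) (Prod.mk i)

section AddCommMonoid

variable [AddCommMonoid R]

lemma traceLeft_apply (M : Matrix (k × l) (k × l) R) (j j' : l) :
    traceLeft M j j' = ∑ i, M (i, j) (i, j') := by
  simp [traceLeft, sum_apply]

lemma traceLeft_sum {ι : Type*} (s : Finset ι) (M : ι → Matrix (k × l) (k × l) R) :
    traceLeft (∑ a ∈ s, M a) = ∑ a ∈ s, traceLeft (M a) := by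
  ext j j'
  simp only [traceLeft_apply, sum_apply]
  exact Finset.sum_comm

lemma trace_traceLeft [Fintype l] (M : Matrix (k × l) (k × l) R) :
    (traceLeft M).trace = M.trace := by
  simp only [trace, diag, traceLeft_apply, Fintype.sum_prod_type]
  exact Finset.sum_comm

end AddCommMonoid

lemma sum_kronecker [NonUnitalNonAssocSemiring R] {m n p q ι : Type*} (s : Finset ι)
    (A : ι → Matrix m n R) (B : Matrix p q R) : (∑ a ∈ s, A a) ⊗ₖ B = ∑ a ∈ s, A a ⊗ₖ B := by
  ext
  simp [sum_apply, Finset.sum_mul]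

variable [Fintype l]

lemma traceLeft_mul [Semiring R] [DecidableEq k] (M : Matrix (k × l) (k × l) R)
    (X : Matrix l l R) : traceLeft M * X = traceLeft (M * (1 ⊗ₖ X)) := by
  ext j j'
  simp only [mul_apply, traceLeft_apply, Finset.sum_mul, kroneckerMap_apply, one_apply, ite_mul,
    one_mul, zero_mul, mul_ite, mul_zero, Fintype.sum_prod_type, Finset.sum_ite_irrel,
    Finset.sum_const_zero, Finset.sum_ite_eq', Finset.mem_univ, ↓reduceIte]
  exact Finset.sum_comm

lemma trace_traceLeft_mul [Semiring R] [DecidableEq k] (M : Matrix (k × l) (k × l) R)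
    (X : Matrix l l R) : (traceLeft M * X).trace = (M * (1 ⊗ₖ X)).trace := by
  rw [traceLeft_mul, trace_traceLeft]

lemma traceLeft_mul_kronecker_one_comm [CommSemiring R] [DecidableEq l]
    (M : Matrix (k × l) (k × l) R) (X : Matrix k k R) :
    traceLeft (M * (X ⊗ₖ 1)) = traceLeft ((X ⊗ₖ 1) * M) := by
  ext j j'
  simp only [traceLeft_apply, mul_apply, kroneckerMap_apply, one_apply, mul_ite, mul_one, mul_zero,
    Fintype.sum_prod_type, Finset.sum_ite_eq', Finset.mem_univ, ↓reduceIte, ite_mul, zero_mul,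
    Finset.sum_ite_eq]
  rw [Finset.sum_comm]
  simp only [mul_comm]

variable {𝕜 : Type*} [RCLike 𝕜]

omit [Fintype l] in
lemma PosSemidef.traceLeft {M : Matrix (k × l) (k × l) 𝕜} (hM : M.PosSemidef) :
    (Matrix.traceLeft M).PosSemidef :=
  posSemidef_sum _ fun _ _ => hM.submatrix _

lemma PosSemidef.traceLeft_mul_kronecker_one [DecidableEq k] [DecidableEq l]
    {ρ : Matrix (k × l) (k × l) 𝕜} {E : Matrix k k 𝕜} (hρ : ρ.PosSemidef) (hE : E.PosSemidef) :
    (Matrix.traceLeft (ρ * (E ⊗ₖ 1))).PosSemidef := by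
  open scoped MatrixOrder in
  obtain ⟨X, rfl⟩ := CStarAlgebra.nonneg_iff_eq_star_mul_self.mp hE.nonneg
  have hfactor : (Xᴴ * X) ⊗ₖ (1 : Matrix l l 𝕜) = (X ⊗ₖ 1)ᴴ * (X ⊗ₖ 1) := by
    rw [conjTranspose_kronecker, conjTranspose_one, ← mul_kronecker_mul, mul_one]
  rw [star_eq_conjTranspose, hfactor, ← mul_assoc, traceLeft_mul_kronecker_one_comm, ← mul_assoc]
  exact (hρ.mul_mul_conjTranspose_same _).traceLeft

end Matrix

theorem tensor_rep_implies_quansal_general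
    (n m : ℕ)
    (A B : Type)
    (OA : A → Type) [∀ x, Fintype (OA x)]
    (OB : B → Type)
    (ρAB : Matrix (Fin n × Fin m) (Fin n × Fin m) ℂ)
    (hρ : ρAB.PosSemidef) (hρtr : ρAB.trace = 1)
    (E : ∀ x : A, OA x → Matrix (Fin n) (Fin n) ℂ)
    (hE : ∀ x a, (E x a).PosSemidef)
    (hEsum : ∀ x, ∑ a, E x a = 1)
    (F : ∀ y : B, OB y → Matrix (Fin m) (Fin m) ℂ) :
    ∃ (σs : ∀ x : A, OA x → Matrix (Fin m) (Fin m) ℂ)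
      (σ : Matrix (Fin m) (Fin m) ℂ),
      (∀ x a, (σs x a).PosSemidef) ∧
      σ.PosSemidef ∧ σ.trace = 1 ∧
      (∀ x, ∑ a, σs x a = σ) ∧
      (∀ x a y b,
        (σs x a * F y b).trace = (ρAB * (E x a ⊗ₖ F y b)).trace) := by
  refine ⟨fun x a => traceLeft (ρAB * (E x a ⊗ₖ 1)), traceLeft ρAB,
    fun x a => hρ.traceLeft_mul_kronecker_one (hE x a), hρ.traceLeft,
    by rw [trace_traceLeft, hρtr], fun x => ?_, fun x a y b => ?_⟩
  · rw [← traceLeft_sum, ← Finset.mul_sum, ← sum_kronecker, hEsum, one_kronecker_one, mul_one]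
  · rw [trace_traceLeft_mul, mul_assoc, ← mul_kronecker_mul, mul_one, one_mul]

/-- If a bipartite behavior admits a tensor representation then it is quansal. -/
theorem tensor_rep_implies_quansal
    (n m : ℕ) (hn : 0 < n) (hm : 0 < m)
    (A B : Type) [Fintype A] [Nonempty A] [Fintype B] [Nonempty B]
    (OA : A → Type) [∀ x, Fintype (OA x)] [∀ x, Nonempty (OA x)]
    (OB : B → Type) [∀ y, Fintype (OB y)] [∀ y, Nonempty (OB y)]
    (ρAB : Matrix (Fin n × Fin m) (Fin n × Fin m) ℂ)
    (hρ : ρAB.PosSemidef) (hρtr : ρAB.trace = 1)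
    (E : ∀ x : A, OA x → Matrix (Fin n) (Fin n) ℂ)
    (hE : ∀ x a, (E x a).PosSemidef)
    (hEsum : ∀ x, ∑ a, E x a = 1)
    (F : ∀ y : B, OB y → Matrix (Fin m) (Fin m) ℂ)
    (hF : ∀ y b, (F y b).PosSemidef)
    (hFsum : ∀ y, ∑ b, F y b = 1) :
    ∃ (σs : ∀ x : A, OA x → Matrix (Fin m) (Fin m) ℂ)
      (σ : Matrix (Fin m) (Fin m) ℂ),
      (∀ x a, (σs x a).PosSemidef) ∧
      σ.PosSemidef ∧ σ.trace = 1 ∧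
      (∀ x, ∑ a, σs x a = σ) ∧
      (∀ x a y b,
        (σs x a * F y b).trace = (ρAB * (E x a ⊗ₖ F y b)).trace) :=
  tensor_rep_implies_quansal_general n m A B OA OB ρAB hρ hρtr E hE hEsum F
end

section
/- If a bipartite behavior is quansal then it admits a tensor representation: Let m be a positive integer, A, B finite nonempty sets with finite outcome sets O_x^A (x ∈ A) and O_y^B (y ∈ B). Let σ^x_a be m×m positive semidefinite complex matrices such that ∑_a σ^x_a equals a fixed m×m positive semidefinite matrix σ with trace 1 for every x ∈ A, and let F^y_b be m×m positive semidefinite matrices with ∑_b F^y_b = 1 for each y. Then there exist a positive integer n, an (n·m)×(n·m) positive semidefinite matrix ρ_AB with trace 1, and n×n positive semidefinite matrices E^x_a with ∑_a E^x_a = 1 for each x, such that trace(ρ_AB · (E^x_a ⊗ₖ F^y_b)) = trace(σ^x_a · F^y_b) for all a, b, x, y. -/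
/-!
Let `ρAB` be the pure state on `vec √σ`, a purification of `σ`: then
`tr (ρAB (E ⊗ F)) = tr (√σ Eᵀ √σ F)` for all `E`, `F`, so it suffices to find POVMs `Gˣ` with
`√σ Gˣₐ √σ = σˣₐ` and to take `Eˣₐ = (Gˣₐ)ᵀ`. Since `0 ≤ σˣₐ ≤ σ`, each `σˣₐ` is supported on the
support of `σ`, so `Gˣₐ = σ^{-1/2} σˣₐ σ^{-1/2}` works, except that these sum to the support
projection of `σ`; adding the kernel projection to one of them fixes the sum and leaves
`√σ Gˣₐ √σ` unchanged.
-/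

open Matrix
open scoped Kronecker ComplexOrder MatrixOrder

namespace Matrix

theorem trace_vecMulVec_vec_mul_kronecker {R m n : Type*} [Fintype m] [Fintype n]
    [NonUnitalCommSemiring R] [Star R] (X : Matrix m n R) (E : Matrix n n R)
    (F : Matrix m m R) :
    (vecMulVec (vec X) (star (vec X)) * (E ⊗ₖ F)).trace = (X * Eᵀ * Xᴴ * F).trace := by
  rw [vecMulVec_mul, trace_vecMulVec, dotProduct_comm, ← dotProduct_mulVec,
    kronecker_mulVec_vec, star_vec_dotProduct_vec, trace_mul_comm]
  simp only [Matrix.mul_assoc]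
  rw [trace_mul_comm]
  simp only [Matrix.mul_assoc]

variable {𝕜 n : Type*} [RCLike 𝕜] [Fintype n]

theorem PosSemidef.mulVec_eq_zero_of_le {τ σ : Matrix n n 𝕜} (hτ : τ.PosSemidef) (hτσ : τ ≤ σ)
    {v : n → 𝕜} (hv : σ *ᵥ v = 0) : τ *ᵥ v = 0 := by
  rw [← hτ.dotProduct_mulVec_zero_iff]
  have h := (le_iff.mp hτσ).dotProduct_mulVec_nonneg v
  rw [sub_mulVec, hv, zero_sub, dotProduct_neg, neg_nonneg] at h
  exact le_antisymm h (hτ.dotProduct_mulVec_nonneg v)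

variable [DecidableEq n]

theorem PosSemidef.mul_eq_zero_of_le {τ σ K : Matrix n n 𝕜} (hτ : τ.PosSemidef) (hτσ : τ ≤ σ)
    (hσK : σ * K = 0) : τ * K = 0 :=
  ext_of_mulVec_single fun j => by
    rw [← mulVec_mulVec, hτ.mulVec_eq_zero_of_le hτσ (by rw [mulVec_mulVec, hσK, zero_mulVec]),
      zero_mulVec]

theorem PosSemidef.cfc_mul_cfc {σ : Matrix n n 𝕜} (hσ : σ.PosSemidef) {f g h : ℝ → ℝ}
    (hfg : ∀ x, 0 ≤ x → f x * g x = h x) : cfc f σ * cfc g σ = cfc h σ := by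
  rw [← cfc_mul f g σ (finite_real_spectrum.continuousOn f) (finite_real_spectrum.continuousOn g)]
  exact cfc_congr fun x hx => hfg x (spectrum_nonneg_of_nonneg hσ.nonneg hx)

theorem PosSemidef.sqrt_eq_cfc_sqrt {σ : Matrix n n 𝕜} (hσ : σ.PosSemidef) :
    CFC.sqrt σ = cfc Real.sqrt σ := by
  rw [CFC.sqrt_eq_real_sqrt σ hσ.nonneg, cfcₙ_eq_cfc]

noncomputable def supportProj (σ : Matrix n n 𝕜) : Matrix n n 𝕜 :=
  cfc (fun x : ℝ => if x = 0 then 0 else 1) σ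

/-- Since `(√0)⁻¹ = 0`, this is the Moore–Penrose inverse of `√σ` when `σ` is positive
semidefinite. -/
noncomputable def pinvSqrt (σ : Matrix n n 𝕜) : Matrix n n 𝕜 :=
  cfc (fun x : ℝ => (√x)⁻¹) σ

theorem supportProj_le_one (σ : Matrix n n 𝕜) : supportProj σ ≤ 1 :=
  cfc_le_one _ _ fun x _ => by by_cases h : x = 0 <;> simp [h]

theorem isHermitian_pinvSqrt (σ : Matrix n n 𝕜) : (pinvSqrt σ).IsHermitian :=
  IsSelfAdjoint.cfc

section

variable {σ : Matrix n n 𝕜} (hσ : σ.PosSemidef)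
include hσ

theorem PosSemidef.supportProj_mul_self : supportProj σ * supportProj σ = supportProj σ :=
  hσ.cfc_mul_cfc fun x _ => by by_cases h : x = 0 <;> simp [h]

theorem PosSemidef.mul_supportProj : σ * supportProj σ = σ :=
  calc σ * supportProj σ = cfc (fun x : ℝ => x) σ * supportProj σ := by rw [cfc_id' ℝ σ]
    _ = cfc (fun x : ℝ => x) σ := hσ.cfc_mul_cfc fun x _ => by by_cases h : x = 0 <;> simp [h]
    _ = σ := cfc_id' ℝ σ

theorem PosSemidef.sqrt_mul_supportProj : CFC.sqrt σ * supportProj σ = CFC.sqrt σ := by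
  rw [hσ.sqrt_eq_cfc_sqrt]
  exact hσ.cfc_mul_cfc fun x _ => by by_cases h : x = 0 <;> simp [h]

theorem PosSemidef.sqrt_mul_pinvSqrt : CFC.sqrt σ * pinvSqrt σ = supportProj σ := by
  rw [hσ.sqrt_eq_cfc_sqrt]
  exact hσ.cfc_mul_cfc fun x hx => by by_cases h : x = 0 <;> simp [h, Real.sqrt_eq_zero hx]

theorem PosSemidef.pinvSqrt_mul_sqrt : pinvSqrt σ * CFC.sqrt σ = supportProj σ := by
  rw [hσ.sqrt_eq_cfc_sqrt]
  exact hσ.cfc_mul_cfc fun x hx => by by_cases h : x = 0 <;> simp [h, Real.sqrt_eq_zero hx]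

theorem PosSemidef.pinvSqrt_mul_mul_pinvSqrt : pinvSqrt σ * σ * pinvSqrt σ = supportProj σ := by
  calc pinvSqrt σ * σ * pinvSqrt σ
      = (pinvSqrt σ * CFC.sqrt σ) * (CFC.sqrt σ * pinvSqrt σ) := by
        simp only [Matrix.mul_assoc]
        rw [← Matrix.mul_assoc (CFC.sqrt σ), CFC.sqrt_mul_sqrt_self σ hσ.nonneg]
    _ = supportProj σ := by
      rw [hσ.pinvSqrt_mul_sqrt, hσ.sqrt_mul_pinvSqrt, hσ.supportProj_mul_self]

theorem PosSemidef.supportProj_mul_mul_supportProj_of_le {τ : Matrix n n 𝕜}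
    (hτ : τ.PosSemidef) (hτσ : τ ≤ σ) : supportProj σ * τ * supportProj σ = τ := by
  have hτp : τ * supportProj σ = τ := by
    have := hτ.mul_eq_zero_of_le hτσ (K := 1 - supportProj σ)
      (by rw [mul_sub, mul_one, hσ.mul_supportProj, sub_self])
    rwa [mul_sub, mul_one, sub_eq_zero, eq_comm] at this
  have hpτ : supportProj σ * τ = τ := by
    have hp : IsSelfAdjoint (supportProj σ) := IsSelfAdjoint.cfc
    simpa only [star_mul, hτ.1.isSelfAdjoint.star_eq, hp.star_eq] using congrArg star hτp
  rw [hpτ, hτp]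

theorem PosSemidef.sqrt_mul_pinvSqrt_conj_mul_sqrt_of_le {τ : Matrix n n 𝕜}
    (hτ : τ.PosSemidef) (hτσ : τ ≤ σ) :
    CFC.sqrt σ * (pinvSqrt σ * τ * pinvSqrt σ) * CFC.sqrt σ = τ := by
  rw [show CFC.sqrt σ * (pinvSqrt σ * τ * pinvSqrt σ) * CFC.sqrt σ
      = (CFC.sqrt σ * pinvSqrt σ) * τ * (pinvSqrt σ * CFC.sqrt σ) by simp only [Matrix.mul_assoc],
    hσ.sqrt_mul_pinvSqrt, hσ.pinvSqrt_mul_sqrt, hσ.supportProj_mul_mul_supportProj_of_le hτ hτσ]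

theorem PosSemidef.sqrt_mul_one_sub_supportProj_mul_sqrt :
    CFC.sqrt σ * (1 - supportProj σ) * CFC.sqrt σ = 0 := by
  rw [mul_sub, mul_one, hσ.sqrt_mul_supportProj, sub_self, zero_mul]

end

theorem PosSemidef.exists_posSemidef_sum_eq_one_sqrt_mul_mul_sqrt {ι : Type*} [Fintype ι]
    [Nonempty ι] {σ : Matrix n n 𝕜} (hσ : σ.PosSemidef) {τ : ι → Matrix n n 𝕜}
    (hτ : ∀ i, (τ i).PosSemidef) (hτσ : ∑ i, τ i = σ) :
    ∃ G : ι → Matrix n n 𝕜, (∀ i, (G i).PosSemidef) ∧ ∑ i, G i = 1 ∧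
      ∀ i, CFC.sqrt σ * G i * CFC.sqrt σ = τ i := by
  classical
  obtain ⟨i₀⟩ := ‹Nonempty ι›
  set k : ι → Matrix n n 𝕜 := Pi.single i₀ (1 - supportProj σ)
  refine ⟨fun i => pinvSqrt σ * τ i * pinvSqrt σ + k i, fun i => ?_, ?_, fun i => ?_⟩
  · have hrτr : (pinvSqrt σ * τ i * pinvSqrt σ).PosSemidef := by
      simpa only [(isHermitian_pinvSqrt σ).eq] using
        (hτ i).mul_mul_conjTranspose_same (pinvSqrt σ)
    refine hrτr.add ?_
    rcases eq_or_ne i i₀ with rfl | h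
    · simpa [k] using le_iff.mp (supportProj_le_one σ)
    · simpa [k, h] using PosSemidef.zero
  · rw [Finset.sum_add_distrib, Fintype.sum_pi_single', ← Finset.sum_mul, ← Finset.mul_sum, hτσ,
      hσ.pinvSqrt_mul_mul_pinvSqrt, add_sub_cancel]
  · have hτiσ : τ i ≤ σ := by
      rw [← hτσ]
      exact Finset.single_le_sum (fun j _ => (hτ j).nonneg) (Finset.mem_univ i)
    have hk : CFC.sqrt σ * k i * CFC.sqrt σ = 0 := by
      rcases eq_or_ne i i₀ with rfl | h
      · simpa [k] using hσ.sqrt_mul_one_sub_supportProj_mul_sqrt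
      · simp [k, h]
    rw [mul_add, add_mul, hk, add_zero, hσ.sqrt_mul_pinvSqrt_conj_mul_sqrt_of_le (hτ i) hτiσ]

end Matrix

theorem quansal_implies_tensor_rep_general
    (m : ℕ) (hm : 0 < m)
    (A B : Type)
    (OA : A → Type) [∀ x, Fintype (OA x)] [∀ x, Nonempty (OA x)]
    (OB : B → Type)
    (σs : ∀ x : A, OA x → Matrix (Fin m) (Fin m) ℂ)
    (σ : Matrix (Fin m) (Fin m) ℂ)
    (hσs : ∀ x a, (σs x a).PosSemidef)
    (hσ : σ.PosSemidef) (hσtr : σ.trace = 1)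
    (hsum : ∀ x, ∑ a, σs x a = σ)
    (F : ∀ y : B, OB y → Matrix (Fin m) (Fin m) ℂ) :
    ∃ (n : ℕ), 0 < n ∧
      ∃ (ρAB : Matrix (Fin n × Fin m) (Fin n × Fin m) ℂ)
        (E : ∀ x : A, OA x → Matrix (Fin n) (Fin n) ℂ),
        ρAB.PosSemidef ∧ ρAB.trace = 1 ∧
        (∀ x a, (E x a).PosSemidef) ∧
        (∀ x, ∑ a, E x a = 1) ∧
        (∀ x a y b,
          (ρAB * (E x a ⊗ₖ F y b)).trace = (σs x a * F y b).trace) := by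
  choose G hG hGsum hGconj using fun x =>
    hσ.exists_posSemidef_sum_eq_one_sqrt_mul_mul_sqrt (hσs x) (hsum x)
  set s := CFC.sqrt σ
  have hs : sᴴ = s := (IsSelfAdjoint.of_nonneg (CFC.sqrt_nonneg σ)).star_eq
  refine ⟨m, hm, vecMulVec (vec s) (star (vec s)), fun x a => (G x a)ᵀ,
    posSemidef_vecMulVec_self_star _, ?_, fun x a => (hG x a).transpose,
    fun x => by rw [← transpose_sum, hGsum, transpose_one], fun x a y b => ?_⟩
  · rw [trace_vecMulVec, dotProduct_comm, star_vec_dotProduct_vec, hs,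
      CFC.sqrt_mul_sqrt_self σ hσ.nonneg, hσtr]
  · rw [trace_vecMulVec_vec_mul_kronecker, transpose_transpose, hs, hGconj]

/-- If a bipartite behavior is quansal then it admits a tensor representation. -/
theorem quansal_implies_tensor_rep
    (m : ℕ) (hm : 0 < m)
    (A B : Type) [Fintype A] [Nonempty A] [Fintype B] [Nonempty B]
    (OA : A → Type) [∀ x, Fintype (OA x)] [∀ x, Nonempty (OA x)]
    (OB : B → Type) [∀ y, Fintype (OB y)] [∀ y, Nonempty (OB y)]
    (σs : ∀ x : A, OA x → Matrix (Fin m) (Fin m) ℂ)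
    (σ : Matrix (Fin m) (Fin m) ℂ)
    (hσs : ∀ x a, (σs x a).PosSemidef)
    (hσ : σ.PosSemidef) (hσtr : σ.trace = 1)
    (hsum : ∀ x, ∑ a, σs x a = σ)
    (F : ∀ y : B, OB y → Matrix (Fin m) (Fin m) ℂ)
    (hF : ∀ y b, (F y b).PosSemidef)
    (hFsum : ∀ y, ∑ b, F y b = 1) :
    ∃ (n : ℕ), 0 < n ∧
      ∃ (ρAB : Matrix (Fin n × Fin m) (Fin n × Fin m) ℂ)
        (E : ∀ x : A, OA x → Matrix (Fin n) (Fin n) ℂ),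
        ρAB.PosSemidef ∧ ρAB.trace = 1 ∧
        (∀ x a, (E x a).PosSemidef) ∧
        (∀ x, ∑ a, E x a = 1) ∧
        (∀ x a y b,
          (ρAB * (E x a ⊗ₖ F y b)).trace = (σs x a * F y b).trace) :=
  quansal_implies_tensor_rep_general m hm A B OA OB σs σ hσs hσ hσtr hsum F
end

section
/- Noisy two-setting/{2,3}-outcome commuting correlations are quansal: Let H be a complex Hilbert space and ψ ∈ H a unit vector. Let Alice have two measurement settings: projections E^1_1, E^1_2 on H with E^1_1 + E^1_2 = 1, and projections E^2_1, E^2_2, E^2_3 on H with E^2_1 + E^2_2 + E^2_3 = 1. Let B be a finite nonempty set and for each y ∈ B let {F^y_b}_{b ∈ O_y} be orthogonal projections on H with ∑_b F^y_b = 1, with every E^x_a commuting with every F^y_b. Define P(a,b|x,y) := ⟨ψ, E^x_a (F^y_b ψ)⟩, and let q(a|x) be any probability distributions over Alice's outcomes (q(a|x) ≥ 0, ∑_a q(a|x) = 1 for x ∈ {1,2}) and p(b|y) := ⟨ψ, F^y_b ψ⟩. Then for every N ∈ ℕ, the behavior P_N(a,b|x,y) := (1 − p_N)·P(a,b|x,y)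 + p_N·q(a|x)·p(b|y), with p_N := (1 + 3/(N+1))/(7 + 3/(N+1)), is quansal: there exist a finite index set I and vectors w^x_{a,i} ∈ H such that ∑_{a,i} |w^1_{a,i}⟩⟨w^1_{a,i}| = ∑_{a,i} |w^2_{a,i}⟩⟨w^2_{a,i}|, ∑_{a,i} ‖w^x_{a,i}‖² = 1 for each x, and ∑_{i∈I} ⟨w^x_{a,i}, F^y_b w^x_{a,i}⟩ = P_N(a,b|x,y) for all a, b, x, y. -/
/-!
Let `U = Σₐ (-1)ᵃ E¹ₐ` and `W = Σₐ ωᵃ E²ₐ` (`ω` a primitive cube root of unity) be the clock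
unitaries of the two measurements. They commute with every `F^y_b`, so moving a vector by a word
`V` in `U` and `W` does not change its statistics `⟪·, F^y_b ·⟫`; and pinching is averaging over
the clock group: `Σₐ E¹ₐ X E¹ₐ = ½ (X + U X U*)`, `Σₐ E²ₐ X E²ₐ = ⅓ Σₘ Wᵐ X W*ᵐ`. Taking the
vectors `√α(V) • V E^x_a ψ` and `√ν(V) • V ψ`, everything reduces to the real monoid algebra on
such words: it suffices to find nonnegative `α₁, α₂` of mass `1 - p` and `ν₁, ν₂` of mass `p`
with `α₁ · ½ (1 + U) + ν₁ = α₂ · ⅓ (1 + W + W²) + ν₂`. The walk on the tree of `ℤ/2 * ℤ/3` that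
alternates the two averages, truncated after `N + 1` steps, does this: relative to its main part,
the boundary has mass `(T + 1) / (6 (T - 1))` with `T = 2 ^ (N + 1)`, which is at most
`p_N / (1 - p_N)`.
-/

open scoped InnerProductSpace ComplexConjugate
open Finset MonoidAlgebra

section Projections
variable {A : Type*} [CStarAlgebra A] [PartialOrder A] [StarOrderedRing A]
  {ι : Type*} [Fintype ι] [DecidableEq ι] {E : ι → A}

theorem completeOrthogonalIdempotents_of_isStarProjection
    (hE : ∀ a, IsStarProjection (E a)) (hsum : ∑ a, E a = 1) :
    CompleteOrthogonalIdempotents E := by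
  refine CompleteOrthogonalIdempotents.iff_ortho_complete.mpr ⟨fun a b hab => ?_, hsum⟩
  have hle : E a ≤ 1 - E b := by
    rw [← hsum, ← sum_erase_eq_sub (mem_univ b)]
    exact single_le_sum (fun c _ => (hE c).nonneg) (mem_erase.mpr ⟨hab, mem_univ a⟩)
  have h := ((hE a).le_iff_mul_eq_left (hE b).one_sub).mp hle
  rwa [mul_sub, mul_one, sub_eq_self] at h

end Projections

namespace CompleteOrthogonalIdempotents
variable {R : Type*} [Ring R] {k : Type*} [CommRing k] [Algebra k R]
  {ι : Type*} [Fintype ι] [DecidableEq ι] {E : ι → R}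

theorem sum_smul_mul_sum_smul (hE : CompleteOrthogonalIdempotents E) (c d : ι → k) :
    (∑ a, c a • E a) * (∑ a, d a • E a) = ∑ a, (c a * d a) • E a := by
  simp only [sum_mul_sum, smul_mul_smul_comm, hE.mul_eq, smul_ite, smul_zero, sum_ite_eq,
    mem_univ, if_true]

theorem sum_smul_pow (hE : CompleteOrthogonalIdempotents E) (c : ι → k) (m : ℕ) :
    (∑ a, c a • E a) ^ m = ∑ a, c a ^ m • E a := by
  induction m with
  | zero => simp [hE.complete]
  | succ m ih => simp only [pow_succ, ih, hE.sum_smul_mul_sum_smul]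

theorem sum_pow_mul_mul_pow (hE : CompleteOrthogonalIdempotents E) {c d : ι → k} (n : ℕ)
    (hcd : ∀ a b, ∑ m ∈ range n, (c a * d b) ^ m = if a = b then (n : k) else 0) (x : R) :
    ∑ m ∈ range n, (∑ a, c a • E a) ^ m * x * (∑ a, d a • E a) ^ m
      = (n : k) • ∑ a, E a * x * E a := by
  calc _ = ∑ m ∈ range n, ∑ a, ∑ b, (c a * d b) ^ m • (E a * x * E b) := by
        simp only [hE.sum_smul_pow, sum_mul, mul_sum, smul_mul_assoc, mul_smul_comm, smul_sum,
          smul_smul, mul_pow]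
        refine sum_congr rfl fun m _ => ?_
        rw [sum_comm]
        simp only [mul_comm]
    _ = ∑ a, ∑ b, (∑ m ∈ range n, (c a * d b) ^ m) • (E a * x * E b) := by
        simp only [sum_smul]
        rw [sum_comm]
        exact sum_congr rfl fun a _ => sum_comm
    _ = _ := by simp [hcd, ite_smul, smul_sum]

end CompleteOrthogonalIdempotents

theorem IsPrimitiveRoot.sum_pow_mul_conj_pow {ζ : ℂ} {n : ℕ} (hζ : IsPrimitiveRoot ζ n)
    (a b : Fin n) :
    ∑ m ∈ range n, (ζ ^ (a : ℕ) * conj ζ ^ (b : ℕ)) ^ m = if a = b then (n : ℂ) else 0 := by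
  have hn : n ≠ 0 := by rintro rfl; exact a.elim0
  have hζ0 : ζ ≠ 0 := hζ.ne_zero hn
  have hconj : conj ζ = ζ⁻¹ := by
    rw [Complex.inv_def, Complex.normSq_eq_norm_sq, hζ.norm'_eq_one hn]; simp
  rw [hconj, inv_pow, ← div_eq_mul_inv]
  split_ifs with hab
  · simp [hab, div_self (pow_ne_zero _ hζ0)]
  · have hne : ζ ^ (a : ℕ) / ζ ^ (b : ℕ) ≠ 1 := fun h => hab <| Fin.ext <|
      hζ.pow_inj a.isLt b.isLt <| (div_eq_one_iff_eq (pow_ne_zero _ hζ0)).mp h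
    rw [geom_sum_eq hne, div_pow, ← pow_mul, ← pow_mul, mul_comm (a : ℕ), mul_comm (b : ℕ),
      pow_mul, pow_mul, hζ.pow_eq_one]
    simp

section Clock
variable {A : Type*} [Ring A] [Algebra ℂ A] {n : ℕ} {E : Fin n → A}

def clock (ζ : ℂ) (E : Fin n → A) : A := ∑ a : Fin n, ζ ^ (a : ℕ) • E a

theorem clock_mul_clock (hE : CompleteOrthogonalIdempotents E) (ζ ξ : ℂ) :
    clock ζ E * clock ξ E = clock (ζ * ξ) E := by
  simp only [clock, hE.sum_smul_mul_sum_smul, mul_pow]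

theorem Commute.clock_left {x : A} (h : ∀ a, Commute (E a) x) (ζ : ℂ) : Commute (clock ζ E) x :=
  Commute.sum_left _ _ _ fun a _ => (h a).smul_left _

variable [StarRing A] [StarModule ℂ A]

theorem star_clock (hsa : ∀ a, IsSelfAdjoint (E a)) (ζ : ℂ) :
    star (clock ζ E) = clock (conj ζ) E := by
  simp [clock, star_sum, (hsa _).star_eq]

theorem clock_mem_unitary (hE : CompleteOrthogonalIdempotents E) (hsa : ∀ a, IsSelfAdjoint (E a))
    {ζ : ℂ} (hζ : ‖ζ‖ = 1) : clock ζ E ∈ unitary A := by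
  have h1 : clock 1 E = 1 := by simpa [clock] using hE.complete
  rw [Unitary.mem_iff, star_clock hsa, clock_mul_clock hE, clock_mul_clock hE, Complex.conj_mul',
    mul_comm, Complex.conj_mul', hζ]
  simp [h1]

theorem clock_mem_unitary_inf_centralizer (hE : CompleteOrthogonalIdempotents E)
    (hsa : ∀ a, IsSelfAdjoint (E a)) {𝒪 : Set A} (h𝒪 : ∀ G ∈ 𝒪, ∀ a, Commute (E a) G)
    {ζ : ℂ} (hζ : ‖ζ‖ = 1) : clock ζ E ∈ unitary A ⊓ Submonoid.centralizer 𝒪 :=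
  ⟨clock_mem_unitary hE hsa hζ, fun G hG => (Commute.clock_left (h𝒪 G hG) ζ).eq.symm⟩

theorem IsPrimitiveRoot.sum_clock_pow_mul_mul_star {ζ : ℂ} (hζ : IsPrimitiveRoot ζ n)
    (hE : CompleteOrthogonalIdempotents E) (hsa : ∀ a, IsSelfAdjoint (E a)) (x : A) :
    ∑ m ∈ range n, clock ζ E ^ m * x * star (clock ζ E ^ m) = (n : ℂ) • ∑ a, E a * x * E a := by
  simp only [star_pow, star_clock hsa]
  exact hE.sum_pow_mul_mul_pow n hζ.sum_pow_mul_conj_pow x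

end Clock

theorem star_mul_mul_eq_of_mem_unitary_inf_centralizer {A : Type*} [Monoid A] [StarMul A]
    {𝒪 : Set A} {G g : A} (hG : G ∈ 𝒪) (hg : g ∈ unitary A ⊓ Submonoid.centralizer 𝒪) :
    star g * G * g = G := by
  rw [mul_assoc, hg.2 G hG, ← mul_assoc, Unitary.star_mul_self_of_mem hg.1, one_mul]

section GroupAlgebra
variable {G : Type*} [Monoid G]

noncomputable def mass : MonoidAlgebra ℝ G →ₐ[ℝ] ℝ := MonoidAlgebra.lift ℝ ℝ G 1

theorem mass_eq_sum (f : MonoidAlgebra ℝ G) : mass f = f.coeff.sum fun _ c => c := by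
  simp [mass, MonoidAlgebra.lift_apply]

variable (G) in
def nonnegCone : Subsemiring (MonoidAlgebra ℝ G) where
  carrier := {f | ∀ g, 0 ≤ f.coeff g}
  mul_mem' {f f'} hf hf' g := by
    classical
    rw [MonoidAlgebra.coeff_mul]
    exact Finsupp.sum_nonneg fun a _ => Finsupp.sum_nonneg fun b _ => by
      split_ifs
      · exact mul_nonneg (hf a) (hf' b)
      · rfl
  one_mem' g := by
    classical
    rw [MonoidAlgebra.one_def, MonoidAlgebra.coeff_single, Finsupp.single_apply]
    split_ifs <;> norm_num
  add_mem' hf hf' g := by simpa using add_nonneg (hf g) (hf' g)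
  zero_mem' g := by simp

theorem of_mem_nonnegCone (g : G) : of ℝ G g ∈ nonnegCone G := by
  classical
  intro h
  rw [MonoidAlgebra.of_apply, MonoidAlgebra.coeff_single, Finsupp.single_apply]
  split_ifs <;> norm_num

theorem smul_mem_nonnegCone {c : ℝ} (hc : 0 ≤ c) {f : MonoidAlgebra ℝ G}
    (hf : f ∈ nonnegCone G) : c • f ∈ nonnegCone G := fun g => by
  simpa using mul_nonneg hc (hf g)

noncomputable def cyclicAverage (g : G) (n : ℕ) : MonoidAlgebra ℝ G :=
  (n : ℝ)⁻¹ • ∑ m ∈ range n, of ℝ G (g ^ m)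

/-- Applied with `X = Σ_{j<n} Φʲ` and `Y = Φⁿ` for `Φ = k y`: the walk alternating the averages
`½ (1 + y)` and `⅓ (1 + k)`, truncated after `n + 1` steps, with its boundary terms. -/
theorem truncated_walk_identity {R : Type*} [Ring R] [Algebra ℝ R] {k y X Y : R}
    (h : X * (k * y) + 1 = X + Y) (θ : ℝ) :
    ((2 / 3 : ℝ) • (X * k) + θ • (Y * k)) * ((2 : ℝ)⁻¹ • (1 + y))
        + ((3 : ℝ)⁻¹ • 1 + (3⁻¹ - θ / 2) • (Y * k))
      = (X + Y) * ((3 : ℝ)⁻¹ • (1 + k)) + (θ / 2) • (Y * (k * y)) := by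
  simp only [add_mul, mul_add, smul_mul_assoc, mul_smul_comm, mul_one, mul_assoc, smul_add]
  linear_combination (norm := module) (3 : ℝ)⁻¹ • h

theorem exists_walk_coupling (u w : G) (n : ℕ) :
    ∃ A₁ N₁ A₂ N₂ : MonoidAlgebra ℝ G,
      A₁ ∈ nonnegCone G ∧ N₁ ∈ nonnegCone G ∧ A₂ ∈ nonnegCone G ∧ N₂ ∈ nonnegCone G ∧
      A₁ * cyclicAverage u 2 + N₁ = A₂ * cyclicAverage w 3 + N₂ ∧
      mass A₁ = 2 ^ (n + 1) - 1 ∧ mass A₂ = 2 ^ (n + 1) - 1 ∧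
      mass N₁ = (2 ^ (n + 1) + 1) / 6 ∧ mass N₂ = (2 ^ (n + 1) + 1) / 6 := by
  set T : ℝ := 2 ^ (n + 1) with hTdef
  have hT : 2 ≤ T := le_self_pow₀ (by norm_num) (by omega)
  set k := of ℝ G w + of ℝ G w ^ 2
  set y := of ℝ G u
  set X := ∑ j ∈ range n, (k * y) ^ j
  set Y := (k * y) ^ n
  -- the top-level weight `θ` is what makes `mass A₁ = mass A₂`
  set θ := (T + 1) / (3 * T)
  have hk0 : k ∈ nonnegCone G := add_mem (of_mem_nonnegCone w) (pow_mem (of_mem_nonnegCone w) 2)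
  have hΦ0 : k * y ∈ nonnegCone G := mul_mem hk0 (of_mem_nonnegCone u)
  have hX0 : X ∈ nonnegCone G := sum_mem fun j _ => pow_mem hΦ0 j
  have hY0 : Y ∈ nonnegCone G := pow_mem hΦ0 n
  have hθ : 0 ≤ θ := by positivity
  have hθ' : 0 ≤ (3 : ℝ)⁻¹ - θ / 2 := by
    have : (3 : ℝ)⁻¹ - θ / 2 = (T - 1) / (6 * T) := by simp only [θ]; field_simp; ring
    rw [this]; exact div_nonneg (by linarith) (by linarith)
  have hk : mass k = 2 := by simp [k, mass]; norm_num
  have hy : mass y = 1 := by simp [y, mass]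
  have hX : mass X = T / 2 - 1 := by
    simp only [X, map_sum, map_pow, map_mul, hk, hy, mul_one]
    rw [geom_sum_eq (by norm_num), hTdef, pow_succ]
    ring
  have hY : mass Y = T / 2 := by simp [Y, map_pow, hk, hy, hTdef, pow_succ]
  refine ⟨(2 / 3 : ℝ) • (X * k) + θ • (Y * k), (3 : ℝ)⁻¹ • 1 + (3⁻¹ - θ / 2) • (Y * k), X + Y,
    (θ / 2) • (Y * (k * y)), ?_, ?_, add_mem hX0 hY0, ?_, ?_, ?_, ?_, ?_, ?_⟩
  · exact add_mem (smul_mem_nonnegCone (by norm_num) (mul_mem hX0 hk0))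
      (smul_mem_nonnegCone hθ (mul_mem hY0 hk0))
  · exact add_mem (smul_mem_nonnegCone (by norm_num) (one_mem _))
      (smul_mem_nonnegCone hθ' (mul_mem hY0 hk0))
  · exact smul_mem_nonnegCone (by positivity) (mul_mem hY0 hΦ0)
  · have hXY : X * (k * y) + 1 = X + Y := by
      rw [(Commute.sum_left _ _ _ fun j _ => (Commute.refl (k * y)).pow_left j).eq,
        ← geom_sum_succ, sum_range_succ]
    have hμ₂ : cyclicAverage u 2 = (2 : ℝ)⁻¹ • (1 + y) := by
      simp only [cyclicAverage, sum_range_succ, sum_range_zero, pow_zero, pow_one, map_one,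
        zero_add, y, Nat.cast_ofNat]
    have hμ₃ : cyclicAverage w 3 = (3 : ℝ)⁻¹ • (1 + k) := by
      simp only [cyclicAverage, sum_range_succ, sum_range_zero, pow_zero, pow_one, zero_add, k,
        map_pow, add_assoc, Nat.cast_ofNat]
    rw [hμ₂, hμ₃]
    exact truncated_walk_identity hXY θ
  all_goals
    simp only [map_add, map_smul, map_mul, map_one, hX, hY, hk, hy, smul_eq_mul, θ]
    field_simp
    ring

/-- The two noise parts are padded with the same multiple of `1`. -/
theorem exists_normalized_coupling {μ₁ μ₂ A₁ N₁ A₂ N₂ : MonoidAlgebra ℝ G}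
    (hA₁ : A₁ ∈ nonnegCone G) (hN₁ : N₁ ∈ nonnegCone G) (hA₂ : A₂ ∈ nonnegCone G)
    (hN₂ : N₂ ∈ nonnegCone G) (h : A₁ * μ₁ + N₁ = A₂ * μ₂ + N₂) {m b p : ℝ} (hm : 0 < m)
    (hmA₁ : mass A₁ = m) (hmA₂ : mass A₂ = m) (hmN₁ : mass N₁ = b) (hmN₂ : mass N₂ = b)
    (hp1 : p ≤ 1) (hp : (1 - p) * b ≤ p * m) :
    ∃ α₁ ν₁ α₂ ν₂ : MonoidAlgebra ℝ G,
      α₁ ∈ nonnegCone G ∧ ν₁ ∈ nonnegCone G ∧ α₂ ∈ nonnegCone G ∧ ν₂ ∈ nonnegCone G ∧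
      α₁ * μ₁ + ν₁ = α₂ * μ₂ + ν₂ ∧
      mass α₁ = 1 - p ∧ mass ν₁ = p ∧ mass α₂ = 1 - p ∧ mass ν₂ = p := by
  set s := (1 - p) / m
  set r := p - s * b
  have hs : 0 ≤ s := div_nonneg (by linarith) hm.le
  have hr : 0 ≤ r := by
    rw [sub_nonneg, div_mul_eq_mul_div, div_le_iff₀ hm]
    linarith
  refine ⟨s • A₁, s • N₁ + r • 1, s • A₂, s • N₂ + r • 1, smul_mem_nonnegCone hs hA₁,
    add_mem (smul_mem_nonnegCone hs hN₁) (smul_mem_nonnegCone hr (one_mem _)),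
    smul_mem_nonnegCone hs hA₂,
    add_mem (smul_mem_nonnegCone hs hN₂) (smul_mem_nonnegCone hr (one_mem _)), ?_, ?_, ?_, ?_, ?_⟩
  · simp only [smul_mul_assoc]
    linear_combination (norm := module) s • h
  all_goals simp only [map_add, map_smul, map_one, hmA₁, hmA₂, hmN₁, hmN₂, smul_eq_mul, r]
  · exact div_mul_cancel₀ _ hm.ne'
  · ring
  · exact div_mul_cancel₀ _ hm.ne'
  · ring

theorem exists_noisy_intertwining (u w : G) (n : ℕ) {p : ℝ} (hp1 : p ≤ 1)
    (hp : (1 - p) * (2 ^ (n + 1) + 1) ≤ 6 * p * (2 ^ (n + 1) - 1)) :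
    ∃ α₁ ν₁ α₂ ν₂ : MonoidAlgebra ℝ G,
      α₁ ∈ nonnegCone G ∧ ν₁ ∈ nonnegCone G ∧ α₂ ∈ nonnegCone G ∧ ν₂ ∈ nonnegCone G ∧
      α₁ * cyclicAverage u 2 + ν₁ = α₂ * cyclicAverage w 3 + ν₂ ∧
      mass α₁ = 1 - p ∧ mass ν₁ = p ∧ mass α₂ = 1 - p ∧ mass ν₂ = p := by
  obtain ⟨A₁, N₁, A₂, N₂, hA₁, hN₁, hA₂, hN₂, h, hmA₁, hmA₂, hmN₁, hmN₂⟩ :=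
    exists_walk_coupling u w n
  have hT : (2 : ℝ) ≤ 2 ^ (n + 1) := le_self_pow₀ (by norm_num) (by omega)
  exact exists_normalized_coupling hA₁ hN₁ hA₂ hN₂ h (by linarith) hmA₁ hmA₂ hmN₁ hmN₂ hp1
    (by linarith)

end GroupAlgebra

section ConjugationRepresentation
variable {A : Type*} [Ring A] [StarRing A] [Algebra ℂ A]

def starConj : A →* Module.End ℝ A where
  toFun a := LinearMap.mulLeftRight ℝ (a, star a)
  map_one' := by ext; simp
  map_mul' a b := by ext; simp [mul_assoc]

@[simp] theorem starConj_apply (a x : A) : starConj a x = a * x * star a := rfl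

noncomputable def conjRep (M : Submonoid A) : MonoidAlgebra ℝ M →ₐ[ℝ] Module.End ℝ A :=
  MonoidAlgebra.lift ℝ (Module.End ℝ A) M (starConj.comp M.subtype)

theorem conjRep_cyclicAverage_clock [StarModule ℂ A] {n : ℕ} [NeZero n]
    {ζ : ℂ} (hζ : IsPrimitiveRoot ζ n) {E : Fin n → A} (hE : CompleteOrthogonalIdempotents E)
    (hsa : ∀ a, IsSelfAdjoint (E a)) (M : Submonoid A) (h : clock ζ E ∈ M) :
    conjRep M (cyclicAverage (⟨clock ζ E, h⟩ : M) n) = ∑ a, starConj (E a) := by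
  refine LinearMap.ext fun x => ?_
  simp only [cyclicAverage, conjRep, map_smul, map_sum, lift_of, MonoidHom.comp_apply,
    Submonoid.coe_subtype, SubmonoidClass.coe_pow, LinearMap.smul_apply, LinearMap.sum_apply,
    starConj_apply, (hsa _).star_eq]
  rw [hζ.sum_clock_pow_mul_mul_star hE hsa, Nat.cast_smul_eq_nsmul, ← Nat.cast_smul_eq_nsmul ℝ,
    inv_smul_smul₀ (NeZero.ne _)]

end ConjugationRepresentation

noncomputable def noiseLevel (N : ℕ) : ℝ := (1 + 3 / ((N : ℝ) + 1)) / (7 + 3 / ((N : ℝ) + 1))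

theorem noiseLevel_eq (N : ℕ) : noiseLevel N = (N + 4) / (7 * N + 10) := by
  unfold noiseLevel
  field_simp
  ring

theorem noiseLevel_le_one (N : ℕ) : noiseLevel N ≤ 1 := by
  rw [noiseLevel_eq, div_le_one (by positivity)]
  linarith [N.cast_nonneg (α := ℝ)]

theorem noiseLevel_bound (N : ℕ) :
    (1 - noiseLevel N) * (2 ^ (N + 1) + 1) ≤ 6 * noiseLevel N * (2 ^ (N + 1) - 1) := by
  have hT : (N : ℝ) + 2 ≤ 2 ^ (N + 1) := by exact_mod_cast Nat.lt_two_pow_self (n := N + 1)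
  have h7 : (0 : ℝ) < 7 * N + 10 := by positivity
  rw [noiseLevel_eq, one_sub_div h7.ne']
  field_simp
  nlinarith [N.cast_nonneg (α := ℝ)]

section NoisyFamily
universe u
variable {H : Type u} [NormedAddCommGroup H] [InnerProductSpace ℂ H]
  {M : Submonoid (H →L[ℂ] H)} {ι : Type*}

noncomputable def weightedVector (f : MonoidAlgebra ℝ M) (v : H) (g : M) : H :=
  (√(f.coeff g) : ℂ) • (g : H →L[ℂ] H) v

noncomputable def noisyFamily (α ν : MonoidAlgebra ℝ M) (E : ι → H →L[ℂ] H) (q : ι → ℝ)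
    (ψ : H) (S : Finset M) (a : ι) : S ⊕ S → H :=
  Sum.elim (weightedVector α (E a ψ) ·) (weightedVector (q a • ν) ψ ·)

variable [CompleteSpace H]

theorem mul_rankOne_mul_star (T : H →L[ℂ] H) (v : H) :
    T * InnerProductSpace.rankOne ℂ v v * star T
      = InnerProductSpace.rankOne ℂ (T v) (T v) := by
  rw [ContinuousLinearMap.mul_def, ContinuousLinearMap.mul_def, InnerProductSpace.comp_rankOne,
    ContinuousLinearMap.star_eq_adjoint, InnerProductSpace.rankOne_comp,
    ContinuousLinearMap.adjoint_adjoint]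

theorem IsStarProjection.inner_apply_of_commute {P G : H →L[ℂ] H} (hP : IsStarProjection P)
    (hPG : Commute P G) (v : H) : ⟪P v, G (P v)⟫_ℂ = ⟪v, P (G v)⟫_ℂ := by
  have h : P * G * P = P * G := by rw [mul_assoc, ← hPG.eq, ← mul_assoc, hP.isIdempotentElem.eq]
  rw [← ContinuousLinearMap.adjoint_inner_right, hP.isSelfAdjoint.adjoint_eq]
  exact congrArg (fun T : H →L[ℂ] H => ⟪v, T v⟫_ℂ) h

variable {f : MonoidAlgebra ℝ M} {S : Finset M}

theorem sum_rankOne_weightedVector (hf : f ∈ nonnegCone M) (hS : f.coeff.support ⊆ S) (v : H) :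
    ∑ g : S, InnerProductSpace.rankOne ℂ (weightedVector f v g) (weightedVector f v g)
      = conjRep M f (InnerProductSpace.rankOne ℂ v v) := by
  rw [sum_coe_sort S fun g => InnerProductSpace.rankOne ℂ (weightedVector f v g)
      (weightedVector f v g), conjRep, MonoidAlgebra.lift_apply,
    Finsupp.sum_of_support_subset _ hS (fun g c => c • (starConj.comp M.subtype) g)
      fun _ _ => zero_smul _ _, LinearMap.sum_apply]
  refine sum_congr rfl fun g _ => ?_
  have hsq : conj (√(f.coeff g) : ℂ) * (√(f.coeff g) : ℂ) = (f.coeff g : ℂ) := by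
    rw [Complex.conj_ofReal, ← Complex.ofReal_mul, Real.mul_self_sqrt (hf g)]
  simp only [weightedVector, map_smul, map_smulₛₗ, _root_.smul_apply, LinearMap.smul_apply,
    MonoidHom.coe_comp, Function.comp_apply, Submonoid.coe_subtype, starConj_apply,
    mul_rankOne_mul_star, smul_smul, hsq]
  exact (Complex.coe_smul _ _).symm

theorem sum_inner_weightedVector (hf : f ∈ nonnegCone M) (hS : f.coeff.support ⊆ S) (v : H)
    {G : H →L[ℂ] H} (hG : ∀ g ∈ M, star g * G * g = G) :
    ∑ g : S, ⟪weightedVector f v g, G (weightedVector f v g)⟫_ℂ = mass f * ⟪v, G v⟫_ℂ := by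
  rw [sum_coe_sort S fun g => ⟪weightedVector f v g, G (weightedVector f v g)⟫_ℂ, mass_eq_sum,
    Finsupp.sum_of_support_subset _ hS _ fun _ _ => rfl, Complex.ofReal_sum, sum_mul]
  refine sum_congr rfl fun g _ => ?_
  have hgG : ⟪(g : H →L[ℂ] H) v, G ((g : H →L[ℂ] H) v)⟫_ℂ = ⟪v, G v⟫_ℂ := by
    rw [← ContinuousLinearMap.adjoint_inner_right, ← ContinuousLinearMap.star_eq_adjoint]
    exact congrArg (fun T : H →L[ℂ] H => ⟪v, T v⟫_ℂ) (hG g g.2)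
  simp only [weightedVector, map_smul, inner_smul_left, inner_smul_right, hgG,
    Complex.conj_ofReal, ← mul_assoc, ← Complex.ofReal_mul, Real.mul_self_sqrt (hf g)]

variable {α ν : MonoidAlgebra ℝ M} {E : ι → H →L[ℂ] H} {q : ι → ℝ} {S : Finset M}

theorem sum_inner_noisyFamily (hα : α ∈ nonnegCone M) (hν : ν ∈ nonnegCone M)
    (hαS : α.coeff.support ⊆ S) (hνS : ν.coeff.support ⊆ S) {a : ι} (hq : 0 ≤ q a)
    (hE : IsStarProjection (E a))
    {G : H →L[ℂ] H} (hEG : Commute (E a) G) (hG : ∀ g ∈ M, star g * G * g = G) (ψ : H) :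
    ∑ i, ⟪noisyFamily α ν E q ψ S a i, G (noisyFamily α ν E q ψ S a i)⟫_ℂ
      = (mass α : ℂ) * ⟪ψ, E a (G ψ)⟫_ℂ + (mass ν : ℂ) * (q a : ℂ) * ⟪ψ, G ψ⟫_ℂ := by
  simp only [noisyFamily, Fintype.sum_sum_type, Sum.elim_inl, Sum.elim_inr,
    sum_inner_weightedVector hα hαS _ hG,
    sum_inner_weightedVector (smul_mem_nonnegCone hq hν) (Finsupp.support_smul.trans hνS) _ hG,
    hE.inner_apply_of_commute hEG, map_smul, smul_eq_mul, Complex.ofReal_mul]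
  ring

variable [Fintype ι]

theorem sum_rankOne_noisyFamily (hα : α ∈ nonnegCone M) (hν : ν ∈ nonnegCone M)
    (hαS : α.coeff.support ⊆ S) (hνS : ν.coeff.support ⊆ S) (hq : ∀ a, 0 ≤ q a)
    (hqsum : ∑ a, q a = 1) (hsa : ∀ a, IsSelfAdjoint (E a)) {μ : MonoidAlgebra ℝ M}
    (hμ : conjRep M μ = ∑ a, starConj (E a)) (ψ : H) :
    ∑ a, ∑ i, InnerProductSpace.rankOne ℂ (noisyFamily α ν E q ψ S a i)
        (noisyFamily α ν E q ψ S a i)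
      = conjRep M (α * μ + ν) (InnerProductSpace.rankOne ℂ ψ ψ) := by
  simp only [noisyFamily, Fintype.sum_sum_type, Sum.elim_inl, Sum.elim_inr,
    sum_rankOne_weightedVector hα hαS,
    sum_rankOne_weightedVector (smul_mem_nonnegCone (hq _) hν) (Finsupp.support_smul.trans hνS)]
  simp only [sum_add_distrib, ← map_sum, ← mul_rankOne_mul_star, (hsa _).star_eq, map_smul,
    map_add, map_mul, Module.End.mul_apply, LinearMap.add_apply, hμ, LinearMap.sum_apply,
    starConj_apply, LinearMap.smul_apply]
  rw [← sum_smul, hqsum, one_smul]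

theorem sum_norm_sq_noisyFamily (hα : α ∈ nonnegCone M) (hν : ν ∈ nonnegCone M)
    (hαS : α.coeff.support ⊆ S) (hνS : ν.coeff.support ⊆ S) (hq : ∀ a, 0 ≤ q a)
    (hqsum : ∑ a, q a = 1) (hE : ∀ a, IsStarProjection (E a)) (hEsum : ∑ a, E a = 1)
    (hM : M ≤ unitary (H →L[ℂ] H)) {ψ : H} (hψ : ‖ψ‖ = 1) :
    ∑ a, ∑ i, ‖noisyFamily α ν E q ψ S a i‖ ^ 2 = mass α + mass ν := by
  have hG : ∀ g ∈ M, star g * 1 * g = 1 := fun g hg => by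
    rw [mul_one, Unitary.star_mul_self_of_mem (hM hg)]
  have hψψ : ⟪ψ, ψ⟫_ℂ = 1 := by rw [inner_self_eq_norm_sq_to_K, hψ]; simp
  have hnorm : ∀ x : H, ((‖x‖ ^ 2 : ℝ) : ℂ) = ⟪x, (1 : H →L[ℂ] H) x⟫_ℂ := fun x => by
    rw [one_apply_eq_self, inner_self_eq_norm_sq_to_K]; push_cast; rfl
  have hEψ : ∑ a, ⟪ψ, E a ψ⟫_ℂ = 1 := by
    rw [← inner_sum, ← _root_.sum_apply, hEsum, one_apply_eq_self, hψψ]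
  have hqC : ∑ a, (q a : ℂ) = 1 := by exact_mod_cast hqsum
  apply Complex.ofReal_injective
  simp only [Complex.ofReal_sum, Complex.ofReal_add, hnorm]
  rw [sum_congr rfl fun a _ =>
    sum_inner_noisyFamily hα hν hαS hνS (hq a) (hE a) (Commute.one_right _) hG ψ]
  simp only [one_apply_eq_self]
  rw [sum_add_distrib, ← mul_sum, hEψ, ← sum_mul, ← mul_sum, hqC, hψψ]
  ring

theorem exists_noisy_ensembles (hM : M ≤ unitary (H →L[ℂ] H)) {ψ : H} (hψ : ‖ψ‖ = 1)
    {ι₁ ι₂ : Type*} [Fintype ι₁] [Fintype ι₂] {E₁ : ι₁ → H →L[ℂ] H} {E₂ : ι₂ → H →L[ℂ] H}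
    (hP₁ : ∀ a, IsStarProjection (E₁ a)) (hE₁sum : ∑ a, E₁ a = 1)
    (hP₂ : ∀ a, IsStarProjection (E₂ a)) (hE₂sum : ∑ a, E₂ a = 1) {μ₁ μ₂ : MonoidAlgebra ℝ M}
    (hμ₁ : conjRep M μ₁ = ∑ a, starConj (E₁ a)) (hμ₂ : conjRep M μ₂ = ∑ a, starConj (E₂ a))
    {q₁ : ι₁ → ℝ} (hq₁ : ∀ a, 0 ≤ q₁ a) (hq₁sum : ∑ a, q₁ a = 1)
    {q₂ : ι₂ → ℝ} (hq₂ : ∀ a, 0 ≤ q₂ a) (hq₂sum : ∑ a, q₂ a = 1)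
    {p : ℝ} {α₁ ν₁ α₂ ν₂ : MonoidAlgebra ℝ M} (hα₁ : α₁ ∈ nonnegCone M)
    (hν₁ : ν₁ ∈ nonnegCone M) (hα₂ : α₂ ∈ nonnegCone M) (hν₂ : ν₂ ∈ nonnegCone M)
    (hcoupling : α₁ * μ₁ + ν₁ = α₂ * μ₂ + ν₂) (hmα₁ : mass α₁ = 1 - p) (hmν₁ : mass ν₁ = p)
    (hmα₂ : mass α₂ = 1 - p) (hmν₂ : mass ν₂ = p) :
    ∃ (I : Type u) (_ : Fintype I) (w₁ : ι₁ → I → H) (w₂ : ι₂ → I → H),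
      (∀ u : H, ∑ a, ∑ i, ⟪w₁ a i, u⟫_ℂ • w₁ a i = ∑ a, ∑ i, ⟪w₂ a i, u⟫_ℂ • w₂ a i) ∧
      (∑ a, ∑ i, ‖w₁ a i‖ ^ 2 = 1) ∧ (∑ a, ∑ i, ‖w₂ a i‖ ^ 2 = 1) ∧
      (∀ a G, Commute (E₁ a) G → (∀ g ∈ M, star g * G * g = G) →
        ∑ i, ⟪w₁ a i, G (w₁ a i)⟫_ℂ
          = (1 - (p : ℂ)) * ⟪ψ, E₁ a (G ψ)⟫_ℂ + (p : ℂ) * (q₁ a : ℂ) * ⟪ψ, G ψ⟫_ℂ) ∧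
      (∀ a G, Commute (E₂ a) G → (∀ g ∈ M, star g * G * g = G) →
        ∑ i, ⟪w₂ a i, G (w₂ a i)⟫_ℂ
          = (1 - (p : ℂ)) * ⟪ψ, E₂ a (G ψ)⟫_ℂ + (p : ℂ) * (q₂ a : ℂ) * ⟪ψ, G ψ⟫_ℂ) := by
  classical
  set S := α₁.coeff.support ∪ ν₁.coeff.support ∪ α₂.coeff.support ∪ ν₂.coeff.support
  have hS₁ : α₁.coeff.support ⊆ S := fun g hg => by simp [S, hg]
  have hS₂ : ν₁.coeff.support ⊆ S := fun g hg => by simp [S, hg]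
  have hS₃ : α₂.coeff.support ⊆ S := fun g hg => by simp [S, hg]
  have hS₄ : ν₂.coeff.support ⊆ S := fun g hg => by simp [S, hg]
  refine ⟨S ⊕ S, inferInstance, noisyFamily α₁ ν₁ E₁ q₁ ψ S, noisyFamily α₂ ν₂ E₂ q₂ ψ S,
    fun u => ?_, ?_, ?_, fun a G hEG hG => ?_, fun a G hEG hG => ?_⟩
  · have h := sum_rankOne_noisyFamily hα₁ hν₁ hS₁ hS₂ hq₁ hq₁sum (fun a => (hP₁ a).isSelfAdjoint)
      hμ₁ ψ
    rw [hcoupling, ← sum_rankOne_noisyFamily hα₂ hν₂ hS₃ hS₄ hq₂ hq₂sum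
      (fun a => (hP₂ a).isSelfAdjoint) hμ₂ ψ] at h
    simpa only [_root_.sum_apply, InnerProductSpace.rankOne_apply] using congr($h u)
  · rw [sum_norm_sq_noisyFamily hα₁ hν₁ hS₁ hS₂ hq₁ hq₁sum hP₁ hE₁sum hM hψ, hmα₁, hmν₁,
      sub_add_cancel]
  · rw [sum_norm_sq_noisyFamily hα₂ hν₂ hS₃ hS₄ hq₂ hq₂sum hP₂ hE₂sum hM hψ, hmα₂, hmν₂,
      sub_add_cancel]
  · rw [sum_inner_noisyFamily hα₁ hν₁ hS₁ hS₂ (hq₁ a) (hP₁ a) hEG hG ψ, hmα₁, hmν₁]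
    push_cast; rfl
  · rw [sum_inner_noisyFamily hα₂ hν₂ hS₃ hS₄ (hq₂ a) (hP₂ a) hEG hG ψ, hmα₂, hmν₂]
    push_cast; rfl

end NoisyFamily

theorem noisy_two_three_outcome_commuting_quansal_general
    (H : Type) [NormedAddCommGroup H] [InnerProductSpace ℂ H] [CompleteSpace H]
    (ψ : H) (hψ : ‖ψ‖ = 1)
    (E₁ : Fin 2 → H →L[ℂ] H) (E₂ : Fin 3 → H →L[ℂ] H)
    (hE₁sa : ∀ a, IsSelfAdjoint (E₁ a)) (hE₁idem : ∀ a, E₁ a ∘L E₁ a = E₁ a)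
    (hE₁sum : ∑ a, E₁ a = 1)
    (hE₂sa : ∀ a, IsSelfAdjoint (E₂ a)) (hE₂idem : ∀ a, E₂ a ∘L E₂ a = E₂ a)
    (hE₂sum : ∑ a, E₂ a = 1)
    (B : Type)
    (O : B → Type)
    (F : ∀ y : B, O y → H →L[ℂ] H)
    (hcomm₁ : ∀ a y b, E₁ a ∘L F y b = F y b ∘L E₁ a)
    (hcomm₂ : ∀ a y b, E₂ a ∘L F y b = F y b ∘L E₂ a)
    (q₁ : Fin 2 → ℝ) (hq₁ : ∀ a, 0 ≤ q₁ a) (hq₁sum : ∑ a, q₁ a = 1)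
    (q₂ : Fin 3 → ℝ) (hq₂ : ∀ a, 0 ≤ q₂ a) (hq₂sum : ∑ a, q₂ a = 1)
    (N : ℕ) :
    let pN : ℝ := (1 + 3 / ((N : ℝ) + 1)) / (7 + 3 / ((N : ℝ) + 1))
    ∃ (I : Type) (_ : Fintype I)
      (w₁ : Fin 2 → I → H) (w₂ : Fin 3 → I → H),
      (∀ u : H, ∑ a, ∑ i, ⟪w₁ a i, u⟫_ℂ • w₁ a i
          = ∑ a, ∑ i, ⟪w₂ a i, u⟫_ℂ • w₂ a i) ∧
      (∑ a, ∑ i, ‖w₁ a i‖ ^ 2 = 1) ∧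
      (∑ a, ∑ i, ‖w₂ a i‖ ^ 2 = 1) ∧
      (∀ a y b, ∑ i, ⟪w₁ a i, F y b (w₁ a i)⟫_ℂ
          = (1 - (pN : ℂ)) * ⟪ψ, E₁ a (F y b ψ)⟫_ℂ
            + (pN : ℂ) * (q₁ a : ℂ) * ⟪ψ, F y b ψ⟫_ℂ) ∧
      (∀ a y b, ∑ i, ⟪w₂ a i, F y b (w₂ a i)⟫_ℂ
          = (1 - (pN : ℂ)) * ⟪ψ, E₂ a (F y b ψ)⟫_ℂ
            + (pN : ℂ) * (q₂ a : ℂ) * ⟪ψ, F y b ψ⟫_ℂ) := by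
  intro pN
  have hP₁ : ∀ a, IsStarProjection (E₁ a) := fun a => ⟨hE₁idem a, hE₁sa a⟩
  have hP₂ : ∀ a, IsStarProjection (E₂ a) := fun a => ⟨hE₂idem a, hE₂sa a⟩
  have hE₁ := completeOrthogonalIdempotents_of_isStarProjection hP₁ hE₁sum
  have hE₂ := completeOrthogonalIdempotents_of_isStarProjection hP₂ hE₂sum
  set 𝒪 := Set.centralizer (Set.range E₁ ∪ Set.range E₂)
  have h𝒪₁ : ∀ G ∈ 𝒪, ∀ a, Commute (E₁ a) G := fun G hG a => hG _ (.inl ⟨a, rfl⟩)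
  have h𝒪₂ : ∀ G ∈ 𝒪, ∀ a, Commute (E₂ a) G := fun G hG a => hG _ (.inr ⟨a, rfl⟩)
  have hF : ∀ y b, F y b ∈ 𝒪 := by
    rintro y b _ (⟨a, rfl⟩ | ⟨a, rfl⟩)
    exacts [hcomm₁ a y b, hcomm₂ a y b]
  set M := unitary (H →L[ℂ] H) ⊓ Submonoid.centralizer 𝒪
  have hζ₂ : IsPrimitiveRoot (-1 : ℂ) 2 := .neg_one 0 (by norm_num)
  have hζ₃ := Complex.isPrimitiveRoot_exp 3 (by norm_num)
  have hU := clock_mem_unitary_inf_centralizer hE₁ hE₁sa h𝒪₁ (hζ₂.norm'_eq_one two_ne_zero)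
  have hW := clock_mem_unitary_inf_centralizer hE₂ hE₂sa h𝒪₂ (hζ₃.norm'_eq_one three_ne_zero)
  obtain ⟨α₁, ν₁, α₂, ν₂, hα₁, hν₁, hα₂, hν₂, hcoupling, hmα₁, hmν₁, hmα₂, hmν₂⟩ :=
    exists_noisy_intertwining (⟨_, hU⟩ : M) ⟨_, hW⟩ N (noiseLevel_le_one N) (noiseLevel_bound N)
  obtain ⟨I, hI, w₁, w₂, hstate, hnorm₁, hnorm₂, hstat₁, hstat₂⟩ :=
    exists_noisy_ensembles inf_le_left hψ hP₁ hE₁sum hP₂ hE₂sum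
      (conjRep_cyclicAverage_clock hζ₂ hE₁ hE₁sa M hU)
      (conjRep_cyclicAverage_clock hζ₃ hE₂ hE₂sa M hW)
      hq₁ hq₁sum hq₂ hq₂sum hα₁ hν₁ hα₂ hν₂ hcoupling hmα₁ hmν₁ hmα₂ hmν₂
  have hFM : ∀ y b, ∀ g ∈ M, star g * F y b * g = F y b := fun y b _ =>
    star_mul_mul_eq_of_mem_unitary_inf_centralizer (hF y b)
  exact ⟨I, hI, w₁, w₂, hstate, hnorm₁, hnorm₂,
    fun a y b => hstat₁ a _ (h𝒪₁ _ (hF y b) a) (hFM y b),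
    fun a y b => hstat₂ a _ (h𝒪₂ _ (hF y b) a) (hFM y b)⟩

/-- Noisy two-setting/{2,3}-outcome commuting correlations are quansal. -/
theorem noisy_two_three_outcome_commuting_quansal
    (H : Type) [NormedAddCommGroup H] [InnerProductSpace ℂ H] [CompleteSpace H]
    (ψ : H) (hψ : ‖ψ‖ = 1)
    (E₁ : Fin 2 → H →L[ℂ] H) (E₂ : Fin 3 → H →L[ℂ] H)
    (hE₁sa : ∀ a, IsSelfAdjoint (E₁ a)) (hE₁idem : ∀ a, E₁ a ∘L E₁ a = E₁ a)
    (hE₁sum : ∑ a, E₁ a = 1)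
    (hE₂sa : ∀ a, IsSelfAdjoint (E₂ a)) (hE₂idem : ∀ a, E₂ a ∘L E₂ a = E₂ a)
    (hE₂sum : ∑ a, E₂ a = 1)
    (B : Type) [Fintype B] [Nonempty B]
    (O : B → Type) [∀ y, Fintype (O y)] [∀ y, Nonempty (O y)]
    (F : ∀ y : B, O y → H →L[ℂ] H)
    (hFsa : ∀ y b, IsSelfAdjoint (F y b))
    (hFidem : ∀ y b, F y b ∘L F y b = F y b)
    (hFsum : ∀ y, ∑ b, F y b = 1)
    (hcomm₁ : ∀ a y b, E₁ a ∘L F y b = F y b ∘L E₁ a)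
    (hcomm₂ : ∀ a y b, E₂ a ∘L F y b = F y b ∘L E₂ a)
    (q₁ : Fin 2 → ℝ) (hq₁ : ∀ a, 0 ≤ q₁ a) (hq₁sum : ∑ a, q₁ a = 1)
    (q₂ : Fin 3 → ℝ) (hq₂ : ∀ a, 0 ≤ q₂ a) (hq₂sum : ∑ a, q₂ a = 1)
    (N : ℕ) :
    let pN : ℝ := (1 + 3 / ((N : ℝ) + 1)) / (7 + 3 / ((N : ℝ) + 1))
    ∃ (I : Type) (_ : Fintype I)
      (w₁ : Fin 2 → I → H) (w₂ : Fin 3 → I → H),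
      (∀ u : H, ∑ a, ∑ i, ⟪w₁ a i, u⟫_ℂ • w₁ a i
          = ∑ a, ∑ i, ⟪w₂ a i, u⟫_ℂ • w₂ a i) ∧
      (∑ a, ∑ i, ‖w₁ a i‖ ^ 2 = 1) ∧
      (∑ a, ∑ i, ‖w₂ a i‖ ^ 2 = 1) ∧
      (∀ a y b, ∑ i, ⟪w₁ a i, F y b (w₁ a i)⟫_ℂ
          = (1 - (pN : ℂ)) * ⟪ψ, E₁ a (F y b ψ)⟫_ℂ
            + (pN : ℂ) * (q₁ a : ℂ) * ⟪ψ, F y b ψ⟫_ℂ) ∧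
      (∀ a y b, ∑ i, ⟪w₂ a i, F y b (w₂ a i)⟫_ℂ
          = (1 - (pN : ℂ)) * ⟪ψ, E₂ a (F y b ψ)⟫_ℂ
            + (pN : ℂ) * (q₂ a : ℂ) * ⟪ψ, F y b ψ⟫_ℂ) :=
  noisy_two_three_outcome_commuting_quansal_general H ψ hψ E₁ E₂ hE₁sa hE₁idem hE₁sum hE₂sa hE₂idem
    hE₂sum B O F hcomm₁ hcomm₂ q₁ hq₁ hq₁sum q₂ hq₂ hq₂sum N
end

section
/- Invariance of the limiting erasure channel under each measurement setting: Let n be a positive integer, A a finite nonempty set, and for each x ∈ A let {E^x_a}_{a ∈ O_x} be a finite family of n×n complex orthogonal projections (Hermitian idempotents) with ∑_a E^x_a = 1. Let Ω̄ := (1/|A|) ∑_{x∈A} ∑_a E^x_a ⊗ₖ (E^x_a)ᵀ, an (n·n)×(n·n) matrix. Then the limit Ω̄^∞ := lim_{N→∞} Ω̄^N exists (entrywise), and for every x ∈ A, Ω̄^∞ · (∑_a E^x_a ⊗ₖ (E^x_a)ᵀ) = Ω̄^∞. -/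
/-!
Each `P x = ∑ₐ E x a ⊗ₖ (E x a)ᵀ` is an orthogonal projection, because orthogonal projections
summing to the identity are mutually orthogonal. Hence `Ω` is an average of
projections and `0 ≤ Ω ≤ 1`; diagonalising, `Ω ^ N` converges to the projection onto the
`1`-eigenspace, and the limit `L` satisfies `L * Ω = L`. Then
`∑ₓ (L (1 - P x)) (L (1 - P x))ᴴ = |A| • L (1 - Ω) Lᴴ = 0` is a sum of positive semidefinite
matrices, so every `L (1 - P x)` vanishes.
-/

open Matrix Filter
open scoped Kronecker MatrixOrder Topology ComplexOrder

namespace IsStarProjection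

theorem finset_sum {R ι : Type*} [NonUnitalSemiring R] [StarRing R] {p : ι → R} {s : Finset ι}
    (hp : ∀ i ∈ s, IsStarProjection (p i)) (horth : ∀ i ∈ s, ∀ j ∈ s, i ≠ j → p i * p j = 0) :
    IsStarProjection (∑ i ∈ s, p i) := by
  classical
  induction s using Finset.induction_on with
  | empty => simp [IsStarProjection.zero]
  | insert a s ha ih =>
    rw [Finset.sum_insert ha]
    refine (hp a (s.mem_insert_self a)).add
      (ih (fun i hi => hp i (Finset.mem_insert_of_mem hi))
        fun i hi j hj => horth i (Finset.mem_insert_of_mem hi) j (Finset.mem_insert_of_mem hj)) ?_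
    rw [Finset.mul_sum]
    exact Finset.sum_eq_zero fun i hi =>
      horth a (s.mem_insert_self a) i (Finset.mem_insert_of_mem hi) (ne_of_mem_of_not_mem hi ha).symm

variable {R l m : Type*} [CommRing R] [StarRing R] [Fintype l] [Fintype m] {p : Matrix m m R}

protected theorem transpose (hp : IsStarProjection p) : IsStarProjection pᵀ where
  isIdempotentElem := by rw [IsIdempotentElem, ← transpose_mul, hp.isIdempotentElem.eq]
  isSelfAdjoint := (isHermitian_iff_isSelfAdjoint.mpr hp.isSelfAdjoint).transpose.isSelfAdjoint

protected theorem kronecker {q : Matrix l l R} (hp : IsStarProjection p)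
    (hq : IsStarProjection q) : IsStarProjection (p ⊗ₖ q) where
  isIdempotentElem := by
    rw [IsIdempotentElem, ← mul_kronecker_mul, hp.isIdempotentElem.eq, hq.isIdempotentElem.eq]
  isSelfAdjoint := by
    rw [IsSelfAdjoint, star_eq_conjTranspose, conjTranspose_kronecker, ← star_eq_conjTranspose,
      ← star_eq_conjTranspose, hp.isSelfAdjoint.star_eq, hq.isSelfAdjoint.star_eq]

end IsStarProjection

theorem tendsto_pow_atTop_nhds_ite {x : ℝ} (hx : x ∈ Set.Ioc (-1) 1) :
    Tendsto (x ^ ·) atTop (𝓝 (if x = 1 then 1 else 0)) := by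
  split_ifs with h
  · simp [h]
  · exact tendsto_pow_atTop_nhds_zero_of_abs_lt_one (abs_lt.2 ⟨hx.1, lt_of_le_of_ne hx.2 h⟩)

theorem mul_eq_self_of_tendsto_pow {M : Type*} [Monoid M] [TopologicalSpace M] [ContinuousMul M]
    [T2Space M] {a l : M} (h : Tendsto (a ^ ·) atTop (𝓝 l)) : l * a = l :=
  tendsto_nhds_unique (by simpa only [pow_succ] using h.mul_const a)
    ((tendsto_add_atTop_iff_nat 1).2 h)

namespace Matrix

variable {𝕜 k m ι : Type*} [RCLike 𝕜] [Fintype k] [Fintype m]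

theorem eq_zero_of_sum_mul_conjTranspose_self_eq_zero {s : Finset ι} {K : ι → Matrix k m 𝕜}
    (h : ∑ i ∈ s, K i * (K i)ᴴ = 0) {i : ι} (hi : i ∈ s) : K i = 0 :=
  self_mul_conjTranspose_eq_zero.1 <| (Finset.sum_eq_zero_iff_of_nonneg fun j _ =>
    (posSemidef_self_mul_conjTranspose (K j)).nonneg).1 h i hi

variable [DecidableEq m]

theorem IsHermitian.exists_tendsto_pow {A : Matrix m m 𝕜} (hA : A.IsHermitian)
    (h : spectrum ℝ A ⊆ Set.Ioc (-1) 1) : ∃ L, Tendsto (A ^ ·) atTop (𝓝 L) := by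
  set φ := Unitary.conjStarAlgAut 𝕜 _ hA.eigenvectorUnitary
  have hpow : ∀ N : ℕ, A ^ N = φ (diagonal fun i => ((hA.eigenvalues i ^ N : ℝ) : 𝕜)) := by
    intro N
    rw [← cfc_pow_id (R := ℝ) A N, hA.cfc_eq]
    rfl
  have hφ : Continuous φ := by
    rw [show ⇑φ = fun x => hA.eigenvectorUnitary.1 * x * star hA.eigenvectorUnitary.1 from
      funext (Unitary.conjStarAlgAut_apply _)]
    fun_prop
  refine ⟨φ (diagonal fun i => ((if hA.eigenvalues i = 1 then 1 else 0 : ℝ) : 𝕜)), ?_⟩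
  simp_rw [hpow]
  refine (hφ.tendsto _).comp ((continuous_id.matrix_diagonal.tendsto _).comp ?_)
  refine tendsto_pi_nhds.2 fun i => (RCLike.continuous_ofReal.tendsto _).comp ?_
  exact tendsto_pow_atTop_nhds_ite (h (hA.eigenvalues_mem_spectrum_real i))

theorem exists_tendsto_pow_of_mem_Icc {A : Matrix m m 𝕜} (hA : A ∈ Set.Icc 0 1) :
    ∃ L, Tendsto (A ^ ·) atTop (𝓝 L) :=
  (nonneg_iff_posSemidef.1 hA.1).isHermitian.exists_tendsto_pow fun x hx =>
    ⟨by linarith [spectrum_nonneg_of_nonneg hA.1 hx], (CFC.le_one_iff A).1 hA.2 x hx⟩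

theorem mul_eq_zero_of_isStarProjection_of_sum_eq_one [Fintype ι] {E : ι → Matrix m m 𝕜}
    (hE : ∀ a, IsStarProjection (E a)) (hsum : ∑ a, E a = 1) {a b : ι} (hab : a ≠ b) :
    E a * E b = 0 := by
  classical
  have hterm : ∀ c, E a * E c * (E a * E c)ᴴ = E a * E c * E a := fun c => by
    rw [conjTranspose_mul, ← star_eq_conjTranspose, ← star_eq_conjTranspose,
      (hE a).isSelfAdjoint.star_eq, (hE c).isSelfAdjoint.star_eq, mul_assoc, ← mul_assoc (E c),
      (hE c).isIdempotentElem.eq, ← mul_assoc]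
  have hzero : ∑ c ∈ Finset.univ.erase a, E a * E c * (E a * E c)ᴴ = 0 := by
    simp_rw [hterm, ← Finset.sum_mul, ← Finset.mul_sum,
      Finset.sum_erase_eq_sub (Finset.mem_univ a), hsum, (hE a).mul_one_sub_self, zero_mul]
  exact eq_zero_of_sum_mul_conjTranspose_self_eq_zero hzero
    (Finset.mem_erase.2 ⟨hab.symm, Finset.mem_univ b⟩)

theorem isStarProjection_sum_kronecker_transpose [Fintype ι] {E : ι → Matrix m m 𝕜}
    (hE : ∀ a, IsStarProjection (E a)) (hsum : ∑ a, E a = 1) :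
    IsStarProjection (∑ a, E a ⊗ₖ (E a)ᵀ) :=
  IsStarProjection.finset_sum (fun a _ => (hE a).kronecker (hE a).transpose) fun a _ b _ hab => by
    rw [← mul_kronecker_mul, mul_eq_zero_of_isStarProjection_of_sum_eq_one hE hsum hab,
      zero_kronecker]

variable [Fintype ι] {p : ι → Matrix m m 𝕜}

theorem inv_card_smul_sum_mem_Icc_of_isStarProjection [Nonempty ι]
    (hp : ∀ i, IsStarProjection (p i)) : (Fintype.card ι : 𝕜)⁻¹ • ∑ i, p i ∈ Set.Icc 0 1 := by
  have hc : (0 : 𝕜) ≤ (Fintype.card ι : 𝕜)⁻¹ := by positivity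
  have hcard : (Fintype.card ι : 𝕜) ≠ 0 := Nat.cast_ne_zero.2 Fintype.card_ne_zero
  refine ⟨smul_nonneg hc (Finset.sum_nonneg fun i _ => (hp i).nonneg), sub_nonneg.1 ?_⟩
  have hone_sub : 1 - (Fintype.card ι : 𝕜)⁻¹ • ∑ i, p i = (Fintype.card ι : 𝕜)⁻¹ • ∑ i, (1 - p i) := by
    rw [Finset.sum_sub_distrib, smul_sub, Finset.sum_const, Finset.card_univ,
      ← Nat.cast_smul_eq_nsmul 𝕜, smul_smul, inv_mul_cancel₀ hcard, one_smul]
  rw [hone_sub]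
  exact smul_nonneg hc (Finset.sum_nonneg fun i _ => (hp i).one_sub_nonneg)

theorem mul_eq_self_of_mul_inv_card_smul_sum_eq_self {L : Matrix k m 𝕜}
    (hp : ∀ i, IsStarProjection (p i)) (hL : L * ((Fintype.card ι : 𝕜)⁻¹ • ∑ i, p i) = L)
    (i : ι) : L * p i = L := by
  have : Nonempty ι := ⟨i⟩
  have hcard : (Fintype.card ι : 𝕜) ≠ 0 := Nat.cast_ne_zero.2 Fintype.card_ne_zero
  have hLsum : L * ∑ j, p j = (Fintype.card ι : 𝕜) • L := by
    conv_rhs => rw [← hL]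
    rw [Matrix.mul_smul, smul_smul, mul_inv_cancel₀ hcard, one_smul]
  have hterm : ∀ j, L * (1 - p j) * (L * (1 - p j))ᴴ = (L - L * p j) * Lᴴ := fun j => by
    rw [conjTranspose_mul, ← star_eq_conjTranspose (1 - p j), (hp j).one_sub.isSelfAdjoint.star_eq,
      Matrix.mul_assoc, ← Matrix.mul_assoc (1 - p j), (hp j).one_sub.isIdempotentElem.eq,
      ← Matrix.mul_assoc, Matrix.mul_sub, Matrix.mul_one]
  have hzero : ∑ j, L * (1 - p j) * (L * (1 - p j))ᴴ = 0 := by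
    simp_rw [hterm, ← Matrix.sum_mul, Finset.sum_sub_distrib, ← Matrix.mul_sum, hLsum,
      Finset.sum_const, Finset.card_univ, Nat.cast_smul_eq_nsmul, sub_self, Matrix.zero_mul]
  have hKi := eq_zero_of_sum_mul_conjTranspose_self_eq_zero hzero (Finset.mem_univ i)
  rwa [Matrix.mul_sub, Matrix.mul_one, sub_eq_zero, eq_comm] at hKi

end Matrix

theorem limiting_erasure_channel_invariance_general
    (n : ℕ)
    (A : Type) [Fintype A] [Nonempty A]
    (O : A → Type) [∀ x, Fintype (O x)]
    (E : ∀ x : A, O x → Matrix (Fin n) (Fin n) ℂ)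
    (hherm : ∀ x a, (E x a).IsHermitian)
    (hidem : ∀ x a, E x a * E x a = E x a)
    (hsum : ∀ x, ∑ a, E x a = 1) :
    let Ω : Matrix (Fin n × Fin n) (Fin n × Fin n) ℂ :=
      (1 / (Fintype.card A : ℂ)) • ∑ x : A, ∑ a, E x a ⊗ₖ (E x a)ᵀ
    ∃ Ωinf : Matrix (Fin n × Fin n) (Fin n × Fin n) ℂ,
      (∀ i j, Tendsto (fun N : ℕ => (Ω ^ N) i j) atTop (nhds (Ωinf i j))) ∧
      ∀ x : A, Ωinf * (∑ a, E x a ⊗ₖ (E x a)ᵀ) = Ωinf := by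
  intro Ω
  have hP : ∀ x, IsStarProjection (∑ a, E x a ⊗ₖ (E x a)ᵀ) := fun x =>
    isStarProjection_sum_kronecker_transpose (fun a => ⟨hidem x a, hherm x a⟩) (hsum x)
  have hΩ : Ω = (Fintype.card A : ℂ)⁻¹ • ∑ x, ∑ a, E x a ⊗ₖ (E x a)ᵀ := by
    rw [← one_div]
  obtain ⟨L, hL⟩ :=
    exists_tendsto_pow_of_mem_Icc (hΩ ▸ inv_card_smul_sum_mem_Icc_of_isStarProjection hP)
  refine ⟨L, fun i j => tendsto_pi_nhds.1 (tendsto_pi_nhds.1 hL i) j, fun x => ?_⟩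
  exact mul_eq_self_of_mul_inv_card_smul_sum_eq_self hP (hΩ ▸ mul_eq_self_of_tendsto_pow hL) x

/-- Invariance of the limiting erasure channel under each measurement setting:
`Ω̄^∞ := lim_N Ω̄^N` exists and `Ω̄^∞ · Ω̄_x = Ω̄^∞` for every setting `x`. -/
theorem limiting_erasure_channel_invariance
    (n : ℕ) (hn : 0 < n)
    (A : Type) [Fintype A] [Nonempty A]
    (O : A → Type) [∀ x, Fintype (O x)]
    (E : ∀ x : A, O x → Matrix (Fin n) (Fin n) ℂ)
    (hherm : ∀ x a, (E x a).IsHermitian)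
    (hidem : ∀ x a, E x a * E x a = E x a)
    (hsum : ∀ x, ∑ a, E x a = 1) :
    let Ω : Matrix (Fin n × Fin n) (Fin n × Fin n) ℂ :=
      (1 / (Fintype.card A : ℂ)) • ∑ x : A, ∑ a, E x a ⊗ₖ (E x a)ᵀ
    ∃ Ωinf : Matrix (Fin n × Fin n) (Fin n × Fin n) ℂ,
      (∀ i j, Tendsto (fun N : ℕ => (Ω ^ N) i j) atTop (nhds (Ωinf i j))) ∧
      ∀ x : A, Ωinf * (∑ a, E x a ⊗ₖ (E x a)ᵀ) = Ωinf :=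
  limiting_erasure_channel_invariance_general n A O E hherm hidem hsum
end
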